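/- arXiv:1004.4964 — 5 statements merged into one kernel-verified Lean document; each statement's English description precedes it below -/
import Mathlib

section
/- Maassen–Uffink entropic uncertainty principle: Let e = {e_1,…,e_N} and f = {f_1,…,f_N} be two orthonormal bases of ℂ^N. For every unit vector ψ ∈ ℂ^N, the entropies H(ψ,e) = ∑_{i=1}^N η(|⟨e_i,ψ⟩|²) and H(ψ,f) = ∑_{j=1}^N η(|⟨f_j,ψ⟩|²) satisfy H(ψ,e) + H(ψ,f) ≥ −2·log( max_{i,j} |⟨e_i, f_j⟩| ). -/
open scoped InnerProductSpace

/-- The entropy function `η(s) = -s·log s` (with `η(0) = 0`, since `Real.log 0 = 0`). -/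
noncomputable def eta (s : ℝ) : ℝ := -s * Real.log s

/-!
Let `U` be the transition matrix `U j i = ⟪f j, e i⟫`, which carries the `e`-coordinates of `ψ`
to its `f`-coordinates. It is an `ℓ²`-isometry (Parseval) and its entries are bounded by `c`, the
largest `|⟪e i, f j⟫|`. Interpolating between these two bounds with Hadamard's three-lines theorem
(the Riesz–Thorin argument) gives `‖U u‖_q ≤ c ^ θ ‖u‖_p` for `p = 2 / (1 + θ)`,
`q = 2 / (1 - θ)`, `0 ≤ θ < 1`. At `θ = 0` both sides equal `1` for `u = (⟪e i, ψ⟫)ᵢ`, so the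
logarithm of their ratio has nonpositive right derivative at `0`. Writing `a i = |⟪e i, ψ⟫|²`,
`b j = |⟪f j, ψ⟫|²`, the terms `∑ a i ^ (1 / (1 + θ))` differentiate to the Shannon entropies, and
that derivative is `-(H(ψ,e) + H(ψ,f)) / 2 - log c`.
-/

open Finset Matrix Filter Topology Complex.HadamardThreeLines

lemma re_one_add_div_two (z : ℂ) : ((1 + z) / 2).re = (1 + z.re) / 2 := by simp

lemma norm_ofReal_cpow_one_add_div_two {a : ℝ} (ha : 0 ≤ a) {z : ℂ} (hz : -1 < z.re) :
    ‖(a : ℂ) ^ ((1 + z) / 2)‖ = a ^ ((1 + z.re) / 2) := by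
  rw [Complex.norm_cpow_eq_rpow_re_of_nonneg ha (by rw [re_one_add_div_two]; linarith),
    re_one_add_div_two]

lemma norm_ofReal_cpow_le_max_one {a : ℝ} (ha : 0 ≤ a) {w : ℂ} (hw₀ : 0 < w.re) (hw₁ : w.re ≤ 1) :
    ‖(a : ℂ) ^ w‖ ≤ max 1 a := by
  rw [Complex.norm_cpow_eq_rpow_re_of_nonneg ha hw₀.ne']
  rcases le_total a 1 with h | h
  · exact le_max_of_le_left (Real.rpow_le_one ha h hw₀.le)
  · exact le_max_of_le_right (by simpa using Real.rpow_le_rpow_of_exponent_le h hw₁)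

lemma div_norm_mul_rpow_rpow (x : ℂ) {p r : ℝ} (h : p * r = 1) :
    x / ‖x‖ * ((‖x‖ ^ p) ^ r : ℝ) = x := by
  rw [← Real.rpow_mul (norm_nonneg x), h, Real.rpow_one]
  exact div_mul_cancel_of_imp fun h => by simpa using h

lemma conj_div_norm_mul_rpow_rpow_mul (x : ℂ) {q r : ℝ} (h : 1 + q * r = q) (hq : q ≠ 0) :
    (starRingEnd ℂ) x / ‖x‖ * ((‖x‖ ^ q) ^ r : ℝ) * x = (‖x‖ ^ q : ℝ) := by
  have hreal : ‖x‖ * (‖x‖ ^ q) ^ r = ‖x‖ ^ q := by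
    rw [← Real.rpow_mul (norm_nonneg x), ← Real.rpow_one_add' (norm_nonneg x) (by rwa [h]), h]
  calc (starRingEnd ℂ) x / ‖x‖ * ((‖x‖ ^ q) ^ r : ℝ) * x
      = (starRingEnd ℂ) x * x / ‖x‖ * ((‖x‖ ^ q) ^ r : ℝ) := by ring
    _ = (‖x‖ ^ q : ℝ) := by
      rw [Complex.conj_mul', pow_two, mul_self_div_self, ← Complex.ofReal_mul, hreal]

lemma rpow_le_of_le_interp {S P c θ : ℝ} (hS : 0 ≤ S) (hP : 0 ≤ P) (hc : 0 ≤ c) (hθ₀ : 0 ≤ θ)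
    (hθ₁ : θ < 1) (h : S ≤ (√S * √P) ^ (1 - θ) * (c * P * S) ^ θ) :
    S ^ ((1 - θ) / 2) ≤ c ^ θ * P ^ ((1 + θ) / 2) := by
  rcases hS.eq_or_lt with rfl | hS
  · rw [Real.zero_rpow (by linarith)]
    positivity
  have hsplit : ∀ x : ℝ, 0 ≤ x → √x ^ (1 - θ) * x ^ θ = x ^ ((1 + θ) / 2) := by
    intro x hx
    rw [Real.sqrt_eq_rpow, ← Real.rpow_mul hx, ← Real.rpow_add' hx (by linarith)]
    ring_nf
  have hrhs : (√S * √P) ^ (1 - θ) * (c * P * S) ^ θ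
      = (c ^ θ * P ^ ((1 + θ) / 2)) * S ^ ((1 + θ) / 2) := by
    rw [Real.mul_rpow (Real.sqrt_nonneg _) (Real.sqrt_nonneg _),
      Real.mul_rpow (by positivity) hS.le, Real.mul_rpow hc hP, ← hsplit S hS.le, ← hsplit P hP]
    ring
  have hS' : S ^ ((1 - θ) / 2) * S ^ ((1 + θ) / 2) = S := by
    rw [← Real.rpow_add hS]
    ring_nf
    exact Real.rpow_one S
  refine le_of_mul_le_mul_right ?_ (Real.rpow_pos_of_pos hS ((1 + θ) / 2))
  rwa [hS', ← hrhs]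

section RieszThorin

variable {ι κ : Type*} [Fintype ι] [Fintype κ]

-- On `re z = 0` this is an `ℓ²` pairing of `M`, on `re z = 1` an `ℓ¹`-`ℓ^∞` pairing.
noncomputable def rieszThorinFamily (M : Matrix κ ι ℂ) (A : ι → ℝ) (B : κ → ℝ) (ε : ι → ℂ)
    (δ : κ → ℂ) (z : ℂ) : ℂ :=
  ∑ j, δ j * (B j : ℂ) ^ ((1 + z) / 2) * (M *ᵥ fun i => ε i * (A i : ℂ) ^ ((1 + z) / 2)) j

variable {M : Matrix κ ι ℂ} {c : ℝ} {A : ι → ℝ} {B : κ → ℝ} {ε : ι → ℂ} {δ : κ → ℂ}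

lemma diffContOnCl_rieszThorinFamily :
    DiffContOnCl ℂ (rieszThorinFamily M A B ε δ) (verticalStrip 0 1) := by
  refine DifferentiableOn.diffContOnCl fun z hz => DifferentiableAt.differentiableWithinAt ?_
  rw [verticalStrip, Complex.closure_preimage_re, closure_Ioo zero_ne_one] at hz
  -- `(0 : ℂ) ^ w` jumps at `w = 0`, which the exponent `(1 + z) / 2` avoids on the closed strip.
  have hw : (1 + z) / 2 ≠ 0 := fun h => by
    have := re_one_add_div_two z
    rw [h, Complex.zero_re] at this
    linarith [hz.1]
  have hpow : ∀ a : ℝ, DifferentiableAt ℂ (fun z : ℂ => (a : ℂ) ^ ((1 + z) / 2)) z :=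
    fun a => ((differentiableAt_id.const_add 1).div_const 2).const_cpow (Or.inr hw)
  unfold rieszThorinFamily mulVec dotProduct
  fun_prop

lemma norm_rieszThorinFamily_le (hM : ∀ j i, ‖M j i‖ ≤ c) (hε : ∀ i, ‖ε i‖ ≤ 1)
    (hδ : ∀ j, ‖δ j‖ ≤ 1) (z : ℂ) :
    ‖rieszThorinFamily M A B ε δ z‖ ≤
      ∑ j, ∑ i, ‖(B j : ℂ) ^ ((1 + z) / 2)‖ * c * ‖(A i : ℂ) ^ ((1 + z) / 2)‖ := by
  refine (norm_sum_le _ _).trans (sum_le_sum fun j _ => ?_)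
  simp only [mulVec, dotProduct, mul_sum]
  refine (norm_sum_le _ _).trans (sum_le_sum fun i _ => ?_)
  have hc : 0 ≤ c := (norm_nonneg _).trans (hM j i)
  simp only [norm_mul]
  calc _ ≤ 1 * ‖(B j : ℂ) ^ ((1 + z) / 2)‖ * (c * (1 * ‖(A i : ℂ) ^ ((1 + z) / 2)‖)) := by
        gcongr
        exacts [hδ j, hM j i, hε i]
    _ = _ := by ring

lemma bddAbove_norm_rieszThorinFamily (hM : ∀ j i, ‖M j i‖ ≤ c) (hA : 0 ≤ A) (hB : 0 ≤ B)
    (hε : ∀ i, ‖ε i‖ ≤ 1) (hδ : ∀ j, ‖δ j‖ ≤ 1) :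
    BddAbove ((norm ∘ rieszThorinFamily M A B ε δ) '' verticalClosedStrip 0 1) := by
  refine ⟨∑ j, ∑ i, max 1 (B j) * c * max 1 (A i), ?_⟩
  rintro _ ⟨z, hz, rfl⟩
  have hw₀ : 0 < ((1 + z) / 2).re := by rw [re_one_add_div_two]; linarith [hz.1]
  have hw₁ : ((1 + z) / 2).re ≤ 1 := by rw [re_one_add_div_two]; linarith [hz.2]
  refine (norm_rieszThorinFamily_le hM hε hδ z).trans
    (sum_le_sum fun j _ => sum_le_sum fun i _ => ?_)
  have hc : 0 ≤ c := (norm_nonneg _).trans (hM j i)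
  gcongr
  exacts [norm_ofReal_cpow_le_max_one (hB j) hw₀ hw₁, norm_ofReal_cpow_le_max_one (hA i) hw₀ hw₁]

lemma norm_rieszThorinFamily_le_of_re_eq_zero
    (hM₂ : ∀ w, ∑ j, ‖(M *ᵥ w) j‖ ^ 2 ≤ ∑ i, ‖w i‖ ^ 2) (hA : 0 ≤ A) (hB : 0 ≤ B)
    (hε : ∀ i, ‖ε i‖ ≤ 1) (hδ : ∀ j, ‖δ j‖ ≤ 1) {z : ℂ} (hz : z.re = 0) :
    ‖rieszThorinFamily M A B ε δ z‖ ≤ √(∑ j, B j) * √(∑ i, A i) := by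
  have hsq : ∀ a : ℝ, 0 ≤ a → ∀ ζ : ℂ, ‖ζ‖ ≤ 1 → ‖ζ * (a : ℂ) ^ ((1 + z) / 2)‖ ^ 2 ≤ a := by
    intro a ha ζ hζ
    rw [norm_mul, norm_ofReal_cpow_one_add_div_two ha (by rw [hz]; norm_num), hz, mul_pow,
      add_zero, ← Real.sqrt_eq_rpow, Real.sq_sqrt ha]
    exact mul_le_of_le_one_left ha (pow_le_one₀ (norm_nonneg _) hζ)
  set v := fun i => ε i * (A i : ℂ) ^ ((1 + z) / 2)
  calc ‖rieszThorinFamily M A B ε δ z‖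
      ≤ ∑ j, ‖δ j * (B j : ℂ) ^ ((1 + z) / 2)‖ * ‖(M *ᵥ v) j‖ := by
        refine (norm_sum_le _ _).trans_eq ?_
        simp only [norm_mul, v]
    _ ≤ √(∑ j, ‖δ j * (B j : ℂ) ^ ((1 + z) / 2)‖ ^ 2) * √(∑ j, ‖(M *ᵥ v) j‖ ^ 2) :=
        Real.sum_mul_le_sqrt_mul_sqrt _ _ _
    _ ≤ √(∑ j, B j) * √(∑ i, ‖v i‖ ^ 2) := by
        gcongr with j
        exacts [hsq _ (hB j) _ (hδ j), hM₂ v]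
    _ ≤ √(∑ j, B j) * √(∑ i, A i) := by
        gcongr with i
        exact hsq _ (hA i) _ (hε i)

lemma norm_rieszThorinFamily_le_of_re_eq_one (hM : ∀ j i, ‖M j i‖ ≤ c) (hA : 0 ≤ A)
    (hB : 0 ≤ B) (hε : ∀ i, ‖ε i‖ ≤ 1) (hδ : ∀ j, ‖δ j‖ ≤ 1) {z : ℂ} (hz : z.re = 1) :
    ‖rieszThorinFamily M A B ε δ z‖ ≤ c * (∑ i, A i) * ∑ j, B j := by
  have hexp : (1 + z.re) / 2 = 1 := by rw [hz]; norm_num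
  refine (norm_rieszThorinFamily_le hM hε hδ z).trans_eq ?_
  simp only [norm_ofReal_cpow_one_add_div_two (hA _) (by linarith : -1 < z.re),
    norm_ofReal_cpow_one_add_div_two (hB _) (by linarith : -1 < z.re), hexp, Real.rpow_one,
    mul_sum, sum_mul]
  exact sum_congr rfl fun j _ => sum_congr rfl fun i _ => by ring

theorem norm_rieszThorinFamily_le_interp (hM : ∀ j i, ‖M j i‖ ≤ c)
    (hM₂ : ∀ w, ∑ j, ‖(M *ᵥ w) j‖ ^ 2 ≤ ∑ i, ‖w i‖ ^ 2) (hA : 0 ≤ A) (hB : 0 ≤ B)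
    (hε : ∀ i, ‖ε i‖ ≤ 1) (hδ : ∀ j, ‖δ j‖ ≤ 1) {θ : ℝ} (hθ : θ ∈ Set.Icc 0 1) :
    ‖rieszThorinFamily M A B ε δ θ‖
      ≤ (√(∑ j, B j) * √(∑ i, A i)) ^ (1 - θ) * (c * (∑ i, A i) * ∑ j, B j) ^ θ := by
  simpa only [Complex.ofReal_re] using norm_le_interp_of_mem_verticalClosedStrip₀₁' _
    (z := θ) (by simpa [verticalClosedStrip] using hθ) diffContOnCl_rieszThorinFamily
    (bddAbove_norm_rieszThorinFamily hM hA hB hε hδ)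
    (fun z hz => norm_rieszThorinFamily_le_of_re_eq_zero hM₂ hA hB hε hδ hz)
    (fun z hz => norm_rieszThorinFamily_le_of_re_eq_one hM hA hB hε hδ hz)

theorem rpow_sum_norm_mulVec_rpow_le (hM : ∀ j i, ‖M j i‖ ≤ c)
    (hM₂ : ∀ w, ∑ j, ‖(M *ᵥ w) j‖ ^ 2 ≤ ∑ i, ‖w i‖ ^ 2) (hc : 0 ≤ c) (u : ι → ℂ) {θ : ℝ}
    (hθ : θ ∈ Set.Ico 0 1) :
    (∑ j, ‖(M *ᵥ u) j‖ ^ (2 / (1 - θ))) ^ ((1 - θ) / 2)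
      ≤ c ^ θ * (∑ i, ‖u i‖ ^ (2 / (1 + θ))) ^ ((1 + θ) / 2) := by
  obtain ⟨hθ₀, hθ₁⟩ := hθ
  set φ := M *ᵥ u with hφ
  have hpow : ∀ x : ℝ, 0 ≤ x → (x : ℂ) ^ ((1 + θ : ℂ) / 2) = ((x ^ ((1 + θ) / 2) : ℝ) : ℂ) :=
    fun x hx => by
      rw [Complex.ofReal_cpow hx]
      push_cast
      rfl
  have hA : 0 ≤ fun i => ‖u i‖ ^ (2 / (1 + θ)) := fun i => by positivity
  have hB : 0 ≤ fun j => ‖φ j‖ ^ (2 / (1 - θ)) := fun j => by positivity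
  -- With the phases `u / ‖u‖` and `conj φ / ‖φ‖` the interpolated form at `θ` is `∑ ‖φ j‖ ^ q`.
  have key := norm_rieszThorinFamily_le_interp hM hM₂ hA hB (ε := fun i => u i / ‖u i‖)
    (δ := fun j => (starRingEnd ℂ) (φ j) / ‖φ j‖) (fun i => by simp [div_self_le_one])
    (fun j => by simp [div_self_le_one]) ⟨hθ₀, hθ₁.le⟩
  have hpq : 2 / (1 + θ) * ((1 + θ) / 2) = 1 := by field_simp
  have hqq : 1 + 2 / (1 - θ) * ((1 + θ) / 2) = 2 / (1 - θ) := by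
    field_simp
    ring
  simp only [rieszThorinFamily, hpow _ (Real.rpow_nonneg (norm_nonneg _) _),
    div_norm_mul_rpow_rpow _ hpq, ← hφ,
    conj_div_norm_mul_rpow_rpow_mul _ hqq (by positivity), ← Complex.ofReal_sum,
    Complex.norm_real, Real.norm_of_nonneg (sum_nonneg fun j _ => hB j)] at key
  exact rpow_le_of_le_interp (sum_nonneg fun j _ => hB j) (sum_nonneg fun i _ => hA i) hc hθ₀ hθ₁
    key

end RieszThorin

section Entropy

lemma HasDerivAt.nonpos_of_eventually_le_right {f : ℝ → ℝ} {f' a : ℝ} (hf : HasDerivAt f f' a)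
    (h : ∀ᶠ x in 𝓝[>] a, f x ≤ f a) : f' ≤ 0 := by
  refine le_of_tendsto ((hasDerivAt_iff_tendsto_slope.mp hf).mono_left (nhdsGT_le_nhdsNE a)) ?_
  filter_upwards [h, self_mem_nhdsWithin] with x hx hax
  rw [slope_def_field]
  exact div_nonpos_of_nonpos_of_nonneg (sub_nonpos.mpr hx) (sub_nonneg.mpr (le_of_lt hax))

lemma hasDerivAt_rpow_one_div_one_add {a : ℝ} (ha : 0 ≤ a) :
    HasDerivAt (fun θ : ℝ => a ^ (1 / (1 + θ))) (eta a) 0 := by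
  rcases ha.eq_or_lt with rfl | ha
  · refine (hasDerivAt_const (0 : ℝ) (0 : ℝ)).congr_of_eventuallyEq ?_
      |>.congr_deriv (by simp [eta])
    filter_upwards [Ioi_mem_nhds (show (-1 : ℝ) < 0 by norm_num)] with θ hθ
    rw [Real.zero_rpow (one_div_pos.mpr (by linarith [show (-1 : ℝ) < θ from hθ])).ne']
  · have hg : HasDerivAt (fun θ : ℝ => 1 / (1 + θ)) (-1) 0 := by
      simpa using ((hasDerivAt_id (0 : ℝ)).const_add 1).fun_inv (by norm_num)
    convert (hasDerivAt_const (0 : ℝ) a).rpow hg ha using 1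
    simp [eta]

variable {ι κ : Type*} [Fintype ι] [Fintype κ]

lemma sum_rpow_pos {a : ι → ℝ} (ha : 0 ≤ a) (h1 : ∑ i, a i = 1) (t : ℝ) : 0 < ∑ i, a i ^ t := by
  obtain ⟨i, -, hi⟩ := exists_ne_zero_of_sum_ne_zero (h1.trans_ne one_ne_zero)
  exact sum_pos' (fun i _ => Real.rpow_nonneg (ha i) t)
    ⟨i, mem_univ _, Real.rpow_pos_of_pos ((ha i).lt_of_ne' hi) t⟩

lemma hasDerivAt_log_sum_rpow {a : ι → ℝ} (ha : 0 ≤ a) (h1 : ∑ i, a i = 1) :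
    HasDerivAt (fun θ : ℝ => Real.log (∑ i, a i ^ (1 / (1 + θ)))) (∑ i, eta (a i)) 0 := by
  have hsum : HasDerivAt (fun θ : ℝ => ∑ i, a i ^ (1 / (1 + θ))) (∑ i, eta (a i)) 0 :=
    HasDerivAt.fun_sum (u := univ) fun i _ => hasDerivAt_rpow_one_div_one_add (ha i)
  simpa [h1] using hsum.log (by simp [h1])

theorem neg_two_mul_log_le_sum_eta_add_sum_eta {a : ι → ℝ} {b : κ → ℝ}
    (ha : 0 ≤ a) (hb : 0 ≤ b) (ha₁ : ∑ i, a i = 1) (hb₁ : ∑ j, b j = 1) {c : ℝ} (hc : 0 < c)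
    (h : ∀ θ ∈ Set.Ioo (0 : ℝ) 1, (∑ j, b j ^ (1 / (1 - θ))) ^ ((1 - θ) / 2)
      ≤ c ^ θ * (∑ i, a i ^ (1 / (1 + θ))) ^ ((1 + θ) / 2)) :
    -2 * Real.log c ≤ ∑ i, eta (a i) + ∑ j, eta (b j) := by
  set La := fun θ : ℝ => Real.log (∑ i, a i ^ (1 / (1 + θ)))
  set Lb := fun θ : ℝ => Real.log (∑ j, b j ^ (1 / (1 - θ)))
  set G := fun θ : ℝ => (1 - θ) / 2 * Lb θ - (1 + θ) / 2 * La θ - θ * Real.log c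
  have hLa₀ : La 0 = 0 := by simp [La, ha₁]
  have hLb₀ : Lb 0 = 0 := by simp [Lb, hb₁]
  have hLa : HasDerivAt La (∑ i, eta (a i)) 0 := hasDerivAt_log_sum_rpow ha ha₁
  have hLb : HasDerivAt Lb (-∑ j, eta (b j)) 0 := by
    have := (hasDerivAt_log_sum_rpow hb hb₁).comp_of_eq 0 (hasDerivAt_neg (0 : ℝ)) neg_zero.symm
    simpa [Lb, Function.comp_def, ← sub_eq_add_neg] using this
  have hG : HasDerivAt G (-(∑ i, eta (a i) + ∑ j, eta (b j)) / 2 - Real.log c) 0 := by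
    refine (((((hasDerivAt_id' (0 : ℝ)).const_sub 1).div_const 2).fun_mul hLb).fun_sub
      ((((hasDerivAt_id' (0 : ℝ)).const_add 1).div_const 2).fun_mul hLa) |>.fun_sub
      ((hasDerivAt_id' (0 : ℝ)).mul_const (Real.log c))).congr_deriv ?_
    rw [hLa₀, hLb₀]
    ring
  have hG₀ : G 0 = 0 := by simp [G, hLa₀, hLb₀]
  have hGle : ∀ θ ∈ Set.Ioo (0 : ℝ) 1, G θ ≤ G 0 := by
    intro θ hθ
    have hA := sum_rpow_pos ha ha₁ (1 / (1 + θ))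
    have hB := sum_rpow_pos hb hb₁ (1 / (1 - θ))
    have := Real.log_le_log (by positivity) (h θ hθ)
    rw [Real.log_rpow hB, Real.log_mul (by positivity) (by positivity), Real.log_rpow hc,
      Real.log_rpow hA] at this
    simp only [hG₀, G, La, Lb]
    linarith
  have := hG.nonpos_of_eventually_le_right (by filter_upwards [Ioo_mem_nhdsGT one_pos] using hGle)
  linarith

end Entropy

section OrthonormalBasis

variable {ι κ E : Type*} [Fintype ι] [Fintype κ] [NormedAddCommGroup E] [InnerProductSpace ℂ E]
  (e : OrthonormalBasis ι ℂ E) (f : OrthonormalBasis κ ℂ E)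

lemma OrthonormalBasis.mulVec_inner (x : E) :
    (Matrix.of fun j i => ⟪f j, e i⟫_ℂ) *ᵥ (fun i => ⟪e i, x⟫_ℂ) = fun j => ⟪f j, x⟫_ℂ :=
  funext fun j => e.sum_inner_mul_inner (f j) x

lemma OrthonormalBasis.sum_sq_norm_mulVec (w : ι → ℂ) :
    ∑ j, ‖((Matrix.of fun j i => ⟪f j, e i⟫_ℂ) *ᵥ w) j‖ ^ 2 = ∑ i, ‖w i‖ ^ 2 := by
  obtain ⟨x, rfl⟩ : ∃ x, (fun i => ⟪e i, x⟫_ℂ) = w :=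
    ⟨e.repr.symm (WithLp.toLp 2 w), funext fun i => by simp [← e.repr_apply_apply]⟩
  rw [e.mulVec_inner f, f.sum_sq_norm_inner_right, e.sum_sq_norm_inner_right]

end OrthonormalBasis

theorem maassen_uffink_entropic_uncertainty_general (N : ℕ)
    (e f : OrthonormalBasis (Fin N) ℂ (EuclideanSpace ℂ (Fin N)))
    (ψ : EuclideanSpace ℂ (Fin N)) (hψ : ‖ψ‖ = 1) :
    (∑ i, eta (‖⟪e i, ψ⟫_ℂ‖ ^ 2)) + (∑ j, eta (‖⟪f j, ψ⟫_ℂ‖ ^ 2)) ≥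
      -2 * Real.log (⨆ p : Fin N × Fin N, ‖⟪e p.1, f p.2⟫_ℂ‖) := by
  set c := ⨆ p : Fin N × Fin N, ‖⟪e p.1, f p.2⟫_ℂ‖
  set M : Matrix (Fin N) (Fin N) ℂ := Matrix.of fun j i => ⟪f j, e i⟫_ℂ
  have hM : ∀ j i, ‖M j i‖ ≤ c := fun j i =>
    (norm_inner_symm (f j) (e i)).trans_le <| le_ciSup
      (Set.finite_range fun p : Fin N × Fin N => ‖⟪e p.1, f p.2⟫_ℂ‖).bddAbove (i, j)
  have hprob : ∀ b : OrthonormalBasis (Fin N) ℂ _, ∑ i, ‖⟪b i, ψ⟫_ℂ‖ ^ 2 = 1 := fun b => by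
    rw [b.sum_sq_norm_inner_right, hψ, one_pow]
  have hMψ : M *ᵥ (fun i => ⟪e i, ψ⟫_ℂ) = fun j => ⟪f j, ψ⟫_ℂ := e.mulVec_inner f ψ
  have hc : 0 < c := by
    by_contra! hc
    have hM0 : M = 0 := Matrix.ext fun j i => norm_le_zero_iff.mp ((hM j i).trans hc)
    have hfψ : ∀ j, ⟪f j, ψ⟫_ℂ = 0 := fun j => by simpa [hM0] using (congrFun hMψ j).symm
    simpa [hfψ] using hprob f
  have hsq : ∀ (x : ℂ) (t : ℝ), (‖x‖ ^ 2) ^ (1 / t) = ‖x‖ ^ (2 / t) := fun x t => by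
    rw [← Real.rpow_natCast_mul (norm_nonneg x), Nat.cast_ofNat, mul_one_div]
  refine neg_two_mul_log_le_sum_eta_add_sum_eta (fun _ => by positivity) (fun _ => by positivity)
    (hprob e) (hprob f) hc fun θ hθ => ?_
  simpa only [hsq, hMψ] using
    rpow_sum_norm_mulVec_rpow_le hM (fun w => (e.sum_sq_norm_mulVec f w).le) hc.le
      (fun i => ⟪e i, ψ⟫_ℂ) (Set.Ioo_subset_Ico_self hθ)

/-- **Maassen–Uffink entropic uncertainty principle.**  For two orthonormal bases
`e`, `f` of `ℂ^N` and any unit vector `ψ`, the entropies of the probability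
distributions `|⟨e_i,ψ⟩|²` and `|⟨f_j,ψ⟩|²` satisfy
`H(ψ,e) + H(ψ,f) ≥ -2 log (max_{i,j} |⟨e_i,f_j⟩|)`. -/
theorem maassen_uffink_entropic_uncertainty (N : ℕ) (hN : 0 < N)
    (e f : OrthonormalBasis (Fin N) ℂ (EuclideanSpace ℂ (Fin N)))
    (ψ : EuclideanSpace ℂ (Fin N)) (hψ : ‖ψ‖ = 1) :
    (∑ i, eta (‖⟪e i, ψ⟫_ℂ‖ ^ 2)) + (∑ j, eta (‖⟪f j, ψ⟫_ℂ‖ ^ 2)) ≥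
      -2 * Real.log (⨆ p : Fin N × Fin N, ‖⟪e p.1, f p.2⟫_ℂ‖) :=
  maassen_uffink_entropic_uncertainty_general N e f ψ hψ
end

section
/- Let e = {e_0,…,e_{N−1}} be the standard orthonormal basis of ℂ^N and let f = {f_0,…,f_{N−1}} be the discrete Fourier basis, f_j = N^{−1/2}(e^{2πi jk/N})_{k=0}^{N−1}. Then for every unit vector ψ ∈ ℂ^N, the entropies satisfy H(ψ,e) + H(ψ,f) ≥ log N. -/
/-!
The Fourier coefficients are `⟪f j, ψ⟫ = ∑ k, M j k * ⟪e k, ψ⟫` for the unitary matrix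
`M j k = ⟪f j, e k⟫`, whose entries all have modulus `c = N^{-1/2}`. Hadamard's three lines theorem,
applied to an analytic family of vectors, interpolates between the bound `c` from `ℓ¹` to `ℓ^∞`
and the `ℓ²` isometry, giving the Hausdorff–Young inequality
`‖M a‖_{2/t} ≤ c ^ (1 - t) ‖a‖_{2/(2-t)}` for `0 < t < 1`. For a unit vector both sides equal
`1` at `t = 1`, so the derivative at `t = 1` of the logarithm of their ratio has a sign; that
derivative is `(H(ψ,e) + H(ψ,f)) / 2 + log c`, whence `H(ψ,e) + H(ψ,f) ≥ -2 log c = log N`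
(Maassen–Uffink).
-/

open scoped InnerProductSpace

open scoped ComplexConjugate Matrix
open Finset

noncomputable def sgnPow (x s : ℂ) : ℂ := (‖x‖ : ℂ) ^ (s - 1) * x

lemma norm_sgnPow (x : ℂ) {s : ℂ} (hs : 0 < s.re) : ‖sgnPow x s‖ = ‖x‖ ^ s.re := by
  rcases eq_or_ne x 0 with rfl | hx
  · simp [sgnPow, Real.zero_rpow hs.ne']
  · have hx' := norm_pos_iff.2 hx
    rw [sgnPow, norm_mul, Complex.norm_cpow_eq_rpow_re_of_pos hx', Complex.sub_re,
      Complex.one_re, Real.rpow_sub_one hx'.ne', div_mul_cancel₀ _ hx'.ne']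

lemma sgnPow_one (x : ℂ) : sgnPow x 1 = x := by simp [sgnPow]

lemma sgnPow_conj_mul_self (x : ℂ) {s : ℝ} (hs : s ≠ 0) :
    sgnPow (conj x) (s - 1) * x = ((‖x‖ ^ s : ℝ) : ℂ) := by
  rcases eq_or_ne x 0 with rfl | hx
  · simp [Real.zero_rpow hs]
  · have hx' := norm_pos_iff.2 hx
    rw [sgnPow, Complex.norm_conj, mul_assoc, Complex.conj_mul', sub_sub, one_add_one_eq_two,
      ← Complex.ofReal_ofNat, ← Complex.ofReal_sub, ← Complex.ofReal_cpow hx'.le,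
      ← Complex.ofReal_pow, ← Complex.ofReal_mul, ← Real.rpow_natCast, ← Real.rpow_add hx']
    norm_num

lemma differentiable_sgnPow (x : ℂ) : Differentiable ℂ (sgnPow x) := by
  rcases eq_or_ne x 0 with rfl | hx
  · have : sgnPow 0 = fun _ => 0 := funext fun s => mul_zero _
    rw [this]
    exact differentiable_const 0
  · exact ((differentiable_id.sub_const 1).const_cpow
      (Or.inl (Complex.ofReal_ne_zero.2 (norm_ne_zero_iff.2 hx)))).mul_const x

lemma norm_sgnPow_mul_one_sub_half (x : ℂ) {r : ℝ} (hr : 0 < r) {z : ℂ} (hz : z.re < 2) :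
    ‖sgnPow x (r * (1 - z / 2))‖ = ‖x‖ ^ (r * (1 - z.re / 2)) := by
  have hre : (r * (1 - z / 2) : ℂ).re = r * (1 - z.re / 2) := by simp
  rw [norm_sgnPow x (by rw [hre]; nlinarith), hre]

lemma norm_sgnPow_mul_one_sub_half_le (x : ℂ) {r : ℝ} (hr : 0 < r) {z : ℂ}
    (hz : z.re ∈ Set.Icc (0 : ℝ) 1) :
    ‖sgnPow x (r * (1 - z / 2))‖ ≤ max (1 : ℝ) ‖x‖ ^ r := by
  rw [norm_sgnPow_mul_one_sub_half x hr (by linarith [hz.2])]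
  calc ‖x‖ ^ (r * (1 - z.re / 2)) ≤ max (1 : ℝ) ‖x‖ ^ (r * (1 - z.re / 2)) :=
        Real.rpow_le_rpow (norm_nonneg x) (le_max_right 1 ‖x‖) (by nlinarith [hz.2])
    _ ≤ max (1 : ℝ) ‖x‖ ^ r :=
        Real.rpow_le_rpow_of_exponent_le (le_max_left _ _) (by nlinarith [hz.1])

lemma sq_norm_sgnPow_mul_one_sub_half (x : ℂ) {r : ℝ} (hr : 0 < r) {z : ℂ} (hz : z.re = 1) :
    ‖sgnPow x (r * (1 - z / 2))‖ ^ 2 = ‖x‖ ^ r := by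
  rw [norm_sgnPow_mul_one_sub_half x hr (by linarith), hz, ← Real.rpow_natCast,
    ← Real.rpow_mul (norm_nonneg x)]
  norm_num [mul_assoc]

section MatrixBounds

variable {ι κ : Type*} [Fintype ι] [Fintype κ] {M : Matrix ι κ ℂ} {c : ℝ}

lemma norm_sum_mul_mulVec_le_of_norm_apply_le (hM : ∀ j k, ‖M j k‖ ≤ c)
    (b : ι → ℂ) (x : κ → ℂ) :
    ‖∑ j, b j * (M *ᵥ x) j‖ ≤ (∑ j, ‖b j‖) * (c * ∑ k, ‖x k‖) := by
  have hrow : ∀ j, ‖(M *ᵥ x) j‖ ≤ c * ∑ k, ‖x k‖ := fun j => calc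
    ‖(M *ᵥ x) j‖ ≤ ∑ k, ‖M j k‖ * ‖x k‖ := by
      simpa only [Matrix.mulVec, dotProduct, norm_mul] using norm_sum_le univ fun k => M j k * x k
    _ ≤ ∑ k, c * ‖x k‖ := by gcongr with k; exact hM j k
    _ = c * ∑ k, ‖x k‖ := (mul_sum ..).symm
  calc ‖∑ j, b j * (M *ᵥ x) j‖ ≤ ∑ j, ‖b j‖ * ‖(M *ᵥ x) j‖ := by
        simpa only [norm_mul] using norm_sum_le univ fun j => b j * (M *ᵥ x) j
    _ ≤ ∑ j, ‖b j‖ * (c * ∑ k, ‖x k‖) := by gcongr with j; exact hrow j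
    _ = (∑ j, ‖b j‖) * (c * ∑ k, ‖x k‖) := (sum_mul ..).symm

lemma norm_sum_mul_mulVec_le_of_contraction
    (hM : ∀ x : κ → ℂ, ∑ j, ‖(M *ᵥ x) j‖ ^ 2 ≤ ∑ k, ‖x k‖ ^ 2) (b : ι → ℂ) (x : κ → ℂ) :
    ‖∑ j, b j * (M *ᵥ x) j‖ ≤ √(∑ j, ‖b j‖ ^ 2) * √(∑ k, ‖x k‖ ^ 2) :=
  calc ‖∑ j, b j * (M *ᵥ x) j‖ ≤ ∑ j, ‖b j‖ * ‖(M *ᵥ x) j‖ := by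
        simpa only [norm_mul] using norm_sum_le univ fun j => b j * (M *ᵥ x) j
    _ ≤ √(∑ j, ‖b j‖ ^ 2) * √(∑ j, ‖(M *ᵥ x) j‖ ^ 2) := Real.sum_mul_le_sqrt_mul_sqrt ..
    _ ≤ √(∑ j, ‖b j‖ ^ 2) * √(∑ k, ‖x k‖ ^ 2) := by gcongr; exact hM x

-- With `b = M *ᵥ a`, `p = 2 / (2 - t)` and `q = 2 / t`, the two factors at `z = t` are
-- `conj b * |b| ^ (q - 2)` and `M *ᵥ a`; on `re z = 0` their moduli are `|b| ^ q` and `|a| ^ p`,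
-- on `re z = 1` their squares are.
noncomputable def interpolant (M : Matrix ι κ ℂ) (a : κ → ℂ) (b : ι → ℂ) (p q : ℝ) (z : ℂ) : ℂ :=
  ∑ j, sgnPow (conj (b j)) (q * (1 - z / 2)) * (M *ᵥ fun k => sgnPow (a k) (p * (1 - z / 2))) j

lemma differentiable_interpolant (a : κ → ℂ) (b : ι → ℂ) (p q : ℝ) :
    Differentiable ℂ (interpolant M a b p q) := by
  have hfam : ∀ (x : ℂ) (r : ℝ), Differentiable ℂ fun z : ℂ => sgnPow x (r * (1 - z / 2)) :=
    fun x r => (differentiable_sgnPow x).comp (by fun_prop)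
  unfold interpolant
  simp only [Matrix.mulVec, dotProduct]
  fun_prop

open Complex.HadamardThreeLines in
lemma bddAbove_norm_interpolant (hc : 0 ≤ c) (hM : ∀ j k, ‖M j k‖ ≤ c) (a : κ → ℂ)
    (b : ι → ℂ) {p q : ℝ} (hp : 0 < p) (hq : 0 < q) :
    BddAbove ((norm ∘ interpolant M a b p q) '' verticalClosedStrip 0 1) := by
  refine ⟨(∑ j, max 1 ‖b j‖ ^ q) * (c * ∑ k, max 1 ‖a k‖ ^ p), ?_⟩
  rintro _ ⟨z, hz, rfl⟩
  refine (norm_sum_mul_mulVec_le_of_norm_apply_le hM _ _).trans ?_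
  gcongr with j _ k _
  · simpa using norm_sgnPow_mul_one_sub_half_le (conj (b j)) hq hz
  · exact norm_sgnPow_mul_one_sub_half_le (a k) hp hz

lemma norm_interpolant_le_of_re_eq_zero (hM : ∀ j k, ‖M j k‖ ≤ c) (a : κ → ℂ) (b : ι → ℂ)
    {p q : ℝ} (hp : 0 < p) (hq : 0 < q) {z : ℂ} (hz : z.re = 0) :
    ‖interpolant M a b p q z‖ ≤ (∑ j, ‖b j‖ ^ q) * (c * ∑ k, ‖a k‖ ^ p) := by
  refine (norm_sum_mul_mulVec_le_of_norm_apply_le hM _ _).trans_eq ?_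
  simp only [norm_sgnPow_mul_one_sub_half _ hp (z := z) (by simp [hz]),
    norm_sgnPow_mul_one_sub_half _ hq (z := z) (by simp [hz]), hz, Complex.norm_conj, zero_div,
    sub_zero, mul_one]

lemma norm_interpolant_le_of_re_eq_one
    (hM : ∀ x : κ → ℂ, ∑ j, ‖(M *ᵥ x) j‖ ^ 2 ≤ ∑ k, ‖x k‖ ^ 2) (a : κ → ℂ) (b : ι → ℂ)
    {p q : ℝ} (hp : 0 < p) (hq : 0 < q) {z : ℂ} (hz : z.re = 1) :
    ‖interpolant M a b p q z‖ ≤ √(∑ j, ‖b j‖ ^ q) * √(∑ k, ‖a k‖ ^ p) := by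
  refine (norm_sum_mul_mulVec_le_of_contraction hM _ _).trans_eq ?_
  simp only [sq_norm_sgnPow_mul_one_sub_half _ hp hz, sq_norm_sgnPow_mul_one_sub_half _ hq hz,
    Complex.norm_conj]

lemma interpolant_eq_sum_norm_rpow (a : κ → ℂ) {t : ℝ} (ht0 : 0 < t) (ht2 : t < 2) :
    interpolant M a (M *ᵥ a) (2 / (2 - t)) (2 / t) t = ((∑ j, ‖(M *ᵥ a) j‖ ^ (2 / t) : ℝ) : ℂ) := by
  have hpt : ((2 / (2 - t) : ℝ) : ℂ) * (1 - t / 2) = 1 := by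
    exact_mod_cast (show 2 / (2 - t) * (1 - t / 2) = 1 by field_simp [show 2 - t ≠ 0 by linarith])
  have hqt : ((2 / t : ℝ) : ℂ) * (1 - t / 2) = ((2 / t : ℝ) : ℂ) - 1 := by
    exact_mod_cast (show 2 / t * (1 - t / 2) = 2 / t - 1 by field_simp)
  simp only [interpolant, hpt, hqt, sgnPow_one, Complex.ofReal_sum]
  exact sum_congr rfl fun j _ => sgnPow_conj_mul_self _ (div_pos two_pos ht0).ne'

theorem sum_norm_mulVec_rpow_le (hc : 0 ≤ c) (hM : ∀ j k, ‖M j k‖ ≤ c)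
    (hM2 : ∀ x : κ → ℂ, ∑ j, ‖(M *ᵥ x) j‖ ^ 2 ≤ ∑ k, ‖x k‖ ^ 2) (a : κ → ℂ) {t : ℝ}
    (ht0 : 0 < t) (ht1 : t < 1) :
    ∑ j, ‖(M *ᵥ a) j‖ ^ (2 / t) ≤ c ^ (1 - t) *
      ((∑ j, ‖(M *ᵥ a) j‖ ^ (2 / t)) * ∑ k, ‖a k‖ ^ (2 / (2 - t))) ^ (1 - t / 2) := by
  set V := ∑ j, ‖(M *ᵥ a) j‖ ^ (2 / t)
  set A := ∑ k, ‖a k‖ ^ (2 / (2 - t))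
  have hp : 0 < 2 / (2 - t) := div_pos two_pos (by linarith)
  have hq : 0 < 2 / t := div_pos two_pos ht0
  have hV : 0 ≤ V := sum_nonneg fun j _ => by positivity
  have hA : 0 ≤ A := sum_nonneg fun k _ => by positivity
  have h3 := Complex.HadamardThreeLines.norm_le_interp_of_mem_verticalClosedStrip₀₁'
    (interpolant M a (M *ᵥ a) _ _) (show (t : ℂ).re ∈ Set.Icc (0 : ℝ) 1 by simp [ht0.le, ht1.le])
    (differentiable_interpolant a _ _ _).diffContOnCl (bddAbove_norm_interpolant hc hM a _ hp hq)
    (fun z hz => norm_interpolant_le_of_re_eq_zero hM a _ hp hq hz)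
    (fun z hz => norm_interpolant_le_of_re_eq_one hM2 a _ hp hq hz)
  rw [interpolant_eq_sum_norm_rpow a ht0 (by linarith), Complex.norm_real, Real.norm_of_nonneg hV,
    Complex.ofReal_re] at h3
  change V ≤ (V * (c * A)) ^ (1 - t) * (√V * √A) ^ t at h3
  refine h3.trans_eq ?_
  rw [← Real.sqrt_mul hV, Real.sqrt_eq_rpow, ← Real.rpow_mul (by positivity), mul_left_comm,
    Real.mul_rpow hc (by positivity), mul_assoc, ← Real.rpow_add' (by positivity) (by linarith)]
  ring_nf

theorem hausdorff_young (hc : 0 ≤ c) (hM : ∀ j k, ‖M j k‖ ≤ c)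
    (hM2 : ∀ x : κ → ℂ, ∑ j, ‖(M *ᵥ x) j‖ ^ 2 ≤ ∑ k, ‖x k‖ ^ 2) (a : κ → ℂ) {t : ℝ}
    (ht0 : 0 < t) (ht1 : t < 1) :
    (∑ j, ‖(M *ᵥ a) j‖ ^ (2 / t)) ^ (t / 2) ≤
      c ^ (1 - t) * (∑ k, ‖a k‖ ^ (2 / (2 - t))) ^ ((2 - t) / 2) := by
  set V := ∑ j, ‖(M *ᵥ a) j‖ ^ (2 / t)
  set A := ∑ k, ‖a k‖ ^ (2 / (2 - t))
  have hA : 0 ≤ A := sum_nonneg fun k _ => by positivity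
  have hV0 : 0 ≤ V := sum_nonneg fun j _ => by positivity
  rcases hV0.eq_or_lt with hV | hV
  · rw [← hV, Real.zero_rpow (by positivity)]
    positivity
  have key : V ≤ c ^ (1 - t) * (V * A) ^ (1 - t / 2) := sum_norm_mulVec_rpow_le hc hM hM2 a ht0 ht1
  rw [Real.mul_rpow hV.le hA] at key
  rw [show (2 - t) / 2 = 1 - t / 2 by ring]
  refine le_of_mul_le_mul_right ?_ (Real.rpow_pos_of_pos hV (1 - t / 2))
  rw [← Real.rpow_add hV, add_sub_cancel, Real.rpow_one]
  exact key.trans_eq (by ring)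

end MatrixBounds

lemma HasDerivAt.nonneg_of_forall_mem_Ioo_le {f : ℝ → ℝ} {d a b : ℝ} (hf : HasDerivAt f d b)
    (hab : a < b) (hle : ∀ t ∈ Set.Ioo a b, f t ≤ f b) : 0 ≤ d := by
  refine ge_of_tendsto ((hasDerivAt_iff_tendsto_slope.1 hf).mono_left
    (nhdsWithin_mono _ fun _ ht => ne_of_lt ht : nhdsWithin b (Set.Iio b) ≤ _)) ?_
  filter_upwards [Ioo_mem_nhdsLT hab] with t ht
  rw [slope_def_field]
  exact div_nonneg_of_nonpos (sub_nonpos.2 (hle t ht)) (sub_nonpos.2 ht.2.le)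

section EntropyFromInterpolation

variable {ι : Type*} [Fintype ι] {w : ι → ℝ}

lemma sum_rpow_pos_of_sum_sq_eq_one (hw : ∀ i, 0 ≤ w i) (hw2 : ∑ i, w i ^ 2 = 1) (s : ℝ) :
    0 < ∑ i, w i ^ s := by
  obtain ⟨i, hi⟩ : ∃ i, w i ≠ 0 := by
    by_contra! h
    simp [h] at hw2
  exact (Real.rpow_pos_of_pos ((hw i).lt_of_ne' hi) s).trans_le
    (single_le_sum (fun j _ => Real.rpow_nonneg (hw j) s) (mem_univ i))

lemma hasDerivAt_sum_rpow (hw : ∀ i, 0 ≤ w i) {r : ℝ} (hr : 0 < r) :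
    HasDerivAt (fun s => ∑ i, w i ^ s) (∑ i, w i ^ r * Real.log (w i)) r := by
  refine HasDerivAt.fun_sum fun i _ => ?_
  rcases (hw i).eq_or_lt with h | h
  · rw [← h, Real.log_zero, mul_zero]
    refine (hasDerivAt_const r 0).congr_of_eventuallyEq ?_
    filter_upwards [Ioi_mem_nhds hr] with s hs
    exact Real.zero_rpow hs.ne'
  · exact (Real.hasStrictDerivAt_const_rpow h r).hasDerivAt

lemma hasDerivAt_mul_log_sum_rpow (hw : ∀ i, 0 ≤ w i) (hw2 : ∑ i, w i ^ 2 = 1) :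
    HasDerivAt (fun t => t / 2 * Real.log (∑ i, w i ^ (2 / t))) ((∑ i, eta (w i ^ 2)) / 2) 1 := by
  have hinv : HasDerivAt (fun t : ℝ => 2 / t) (-2) 1 := by
    simpa [div_eq_mul_inv] using (hasDerivAt_inv one_ne_zero).const_mul (2 : ℝ)
  have hS2 : ∑ i, w i ^ (2 / 1 : ℝ) = 1 := by norm_num [hw2]
  have hlog := ((hasDerivAt_sum_rpow hw two_pos).comp_of_eq 1 hinv (by norm_num)).log
    (by simp [hw2])
  have hH : ∑ i, eta (w i ^ 2) = -2 * ∑ i, w i ^ 2 * Real.log (w i) := by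
    rw [mul_sum]
    refine sum_congr rfl fun i _ => ?_
    rw [eta, Real.log_pow]
    push_cast
    ring
  refine (((hasDerivAt_id (1 : ℝ)).div_const 2).fun_mul hlog).congr_deriv ?_
  simp only [Function.comp_apply, hS2, Real.log_one, id, hH, Real.rpow_two]
  ring

theorem neg_two_mul_log_le_sum_eta_add_sum_eta_s1 {κ : Type*} [Fintype κ] {u : κ → ℝ} {v : ι → ℝ}
    (hu : ∀ k, 0 ≤ u k) (hv : ∀ j, 0 ≤ v j) (hu2 : ∑ k, u k ^ 2 = 1) (hv2 : ∑ j, v j ^ 2 = 1)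
    {c : ℝ} (hc : 0 < c)
    (hHY : ∀ t : ℝ, 0 < t → t < 1 → (∑ j, v j ^ (2 / t)) ^ (t / 2) ≤
      c ^ (1 - t) * (∑ k, u k ^ (2 / (2 - t))) ^ ((2 - t) / 2)) :
    -2 * Real.log c ≤ ∑ k, eta (u k ^ 2) + ∑ j, eta (v j ^ 2) := by
  let φ : ℝ → ℝ := fun t => t / 2 * Real.log (∑ j, v j ^ (2 / t)) -
    (2 - t) / 2 * Real.log (∑ k, u k ^ (2 / (2 - t))) - (1 - t) * Real.log c
  have hφ1 : φ 1 = 0 := by norm_num [φ, hu2, hv2]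
  have hφle : ∀ t ∈ Set.Ioo (0 : ℝ) 1, φ t ≤ φ 1 := by
    rintro t ⟨ht0, ht1⟩
    have hV := sum_rpow_pos_of_sum_sq_eq_one hv hv2 (2 / t)
    have hA := sum_rpow_pos_of_sum_sq_eq_one hu hu2 (2 / (2 - t))
    have hlog := Real.log_le_log (by positivity) (hHY t ht0 ht1)
    rw [Real.log_rpow hV, Real.log_mul (by positivity) (by positivity), Real.log_rpow hc,
      Real.log_rpow hA] at hlog
    simp only [φ, hφ1]
    linarith
  have hφ' :
      HasDerivAt φ ((∑ j, eta (v j ^ 2)) / 2 + (∑ k, eta (u k ^ 2)) / 2 + Real.log c) 1 := by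
    have hU := (hasDerivAt_mul_log_sum_rpow hu hu2).comp_of_eq 1 ((hasDerivAt_id 1).const_sub 2)
      (by norm_num)
    have hc' := ((hasDerivAt_id (1 : ℝ)).const_sub 1).mul_const (Real.log c)
    exact (((hasDerivAt_mul_log_sum_rpow hv hv2).fun_sub hU).fun_sub hc').congr_deriv (by ring)
  linarith [hφ'.nonneg_of_forall_mem_Ioo_le zero_lt_one hφle]

end EntropyFromInterpolation

theorem maassen_uffink {ι κ E : Type*} [Fintype ι] [Fintype κ] [NormedAddCommGroup E]
    [InnerProductSpace ℂ E] (e : OrthonormalBasis κ ℂ E) (f : OrthonormalBasis ι ℂ E) {c : ℝ}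
    (hc : 0 < c) (hef : ∀ j k, ‖⟪f j, e k⟫_ℂ‖ ≤ c) {ψ : E} (hψ : ‖ψ‖ = 1) :
    -2 * Real.log c ≤ ∑ k, eta (‖⟪e k, ψ⟫_ℂ‖ ^ 2) + ∑ j, eta (‖⟪f j, ψ⟫_ℂ‖ ^ 2) := by
  let M : Matrix ι κ ℂ := fun j k => ⟪f j, e k⟫_ℂ
  have hM : ∀ x : E, (M *ᵥ fun k => ⟪e k, x⟫_ℂ) = fun j => ⟪f j, x⟫_ℂ :=
    fun x => funext fun j => e.sum_inner_mul_inner (f j) x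
  have hM2 : ∀ x : κ → ℂ, ∑ j, ‖(M *ᵥ x) j‖ ^ 2 ≤ ∑ k, ‖x k‖ ^ 2 := by
    intro x
    set y := e.repr.symm (WithLp.toLp 2 x)
    have hy : (fun k => ⟪e k, y⟫_ℂ) = x := funext fun k => by
      rw [← e.repr_apply_apply, LinearIsometryEquiv.apply_symm_apply]
    rw [← hy, hM, f.sum_sq_norm_inner_right, e.sum_sq_norm_inner_right]
  refine neg_two_mul_log_le_sum_eta_add_sum_eta_s1 (fun _ => norm_nonneg _)
    (fun _ => norm_nonneg _) (by rw [e.sum_sq_norm_inner_right, hψ, one_pow])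
    (by rw [f.sum_sq_norm_inner_right, hψ, one_pow]) hc fun t ht0 ht1 => ?_
  have := hausdorff_young hc.le hef hM2 (fun k => ⟪e k, ψ⟫_ℂ) ht0 ht1
  rwa [hM] at this

noncomputable def dftVec (N : ℕ) (j : Fin N) : EuclideanSpace ℂ (Fin N) :=
  WithLp.toLp 2 fun k => ((Real.sqrt N : ℂ))⁻¹ *
    Complex.exp (2 * (Real.pi : ℂ) * Complex.I * ((j : ℕ) : ℂ) * ((k : ℕ) : ℂ) / (N : ℂ))

lemma sum_pow_eq_ite_of_pow_eq_one {N : ℕ} {ω : ℂ} (hω : ω ^ N = 1) :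
    ∑ k : Fin N, ω ^ (k : ℕ) = if ω = 1 then (N : ℂ) else 0 := by
  split_ifs with h
  · simp [h]
  · rw [Fin.sum_univ_eq_sum_range (ω ^ ·), geom_sum_eq h, hω, sub_self, zero_div]

lemma inner_dftVec (N : ℕ) (j l : Fin N) :
    ⟪dftVec N j, dftVec N l⟫_ℂ =
      (N : ℂ)⁻¹ *
        ∑ k : Fin N, (Complex.exp (2 * Real.pi * Complex.I / N) ^ ((l : ℤ) - j)) ^ (k : ℕ) := by
  rw [dftVec, dftVec, PiLp.inner_apply, mul_sum]
  refine sum_congr rfl fun k _ => ?_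
  rw [RCLike.inner_apply, PiLp.toLp_apply, PiLp.toLp_apply, map_mul, map_inv₀,
    Complex.conj_ofReal, mul_mul_mul_comm, ← mul_inv, ← Complex.ofReal_mul,
    Real.mul_self_sqrt (Nat.cast_nonneg N), ← Complex.exp_conj, ← Complex.exp_add, ← zpow_natCast,
    ← zpow_mul, ← Complex.exp_int_mul]
  congr 2
  simp only [map_div₀, map_mul, Complex.conj_I, Complex.conj_ofReal, map_natCast, map_ofNat]
  push_cast
  ring

lemma orthonormal_dftVec (N : ℕ) : Orthonormal ℂ (dftVec N) := by
  rw [orthonormal_iff_ite]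
  intro j l
  rcases N.eq_zero_or_pos with rfl | hN
  · exact j.elim0
  have hζ := Complex.isPrimitiveRoot_exp N hN.ne'
  have hdvd : (N : ℤ) ∣ (l : ℤ) - j ↔ j = l := by
    refine ⟨fun h => Fin.ext ?_, fun h => by rw [h, sub_self]; exact dvd_zero _⟩
    have := Int.eq_zero_of_abs_lt_dvd h (abs_lt.2 ⟨by omega, by omega⟩)
    omega
  rw [inner_dftVec, sum_pow_eq_ite_of_pow_eq_one (by rw [← zpow_natCast, ← zpow_mul,
    mul_comm ((l : ℤ) - j), zpow_mul, hζ.zpow_eq_one, one_zpow])]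
  simp only [hζ.zpow_eq_one_iff_dvd, hdvd]
  split_ifs <;> simp [hN.ne']

lemma norm_dftVec_apply (N : ℕ) (j k : Fin N) : ‖dftVec N j k‖ = (Real.sqrt N)⁻¹ := by
  simp [dftVec, Complex.norm_exp]

noncomputable def dftBasis (N : ℕ) : OrthonormalBasis (Fin N) ℂ (EuclideanSpace ℂ (Fin N)) :=
  OrthonormalBasis.mk (orthonormal_dftVec N)
    ((orthonormal_dftVec N).linearIndependent.span_eq_top_of_card_eq_finrank' (by simp)).ge

/-- For the standard basis `e` of `ℂ^N` and the discrete Fourier basis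
`f_j = N^{-1/2}(e^{2πi jk/N})_k`, every unit vector `ψ` satisfies
`H(ψ,e) + H(ψ,f) ≥ log N`. -/
theorem entropic_uncertainty_fourier (N : ℕ) (hN : 0 < N)
    (e f : Fin N → EuclideanSpace ℂ (Fin N))
    (he : ∀ i, e i = EuclideanSpace.single i 1)
    (hf : ∀ j k : Fin N, f j k =
      ((Real.sqrt N : ℂ))⁻¹ *
        Complex.exp (2 * (Real.pi : ℂ) * Complex.I * ((j : ℕ) : ℂ) * ((k : ℕ) : ℂ) / (N : ℂ)))
    (ψ : EuclideanSpace ℂ (Fin N)) (hψ : ‖ψ‖ = 1) :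
    (∑ i, eta (‖⟪e i, ψ⟫_ℂ‖ ^ 2)) + (∑ j, eta (‖⟪f j, ψ⟫_ℂ‖ ^ 2)) ≥ Real.log N := by
  obtain rfl : e = EuclideanSpace.basisFun (Fin N) ℂ :=
    funext fun i => by rw [he, EuclideanSpace.basisFun_apply]
  obtain rfl : f = dftBasis N := funext fun j => by
    ext k
    rw [dftBasis, OrthonormalBasis.coe_mk, hf]
    rfl
  have hentry : ∀ j k, ‖⟪dftBasis N j, EuclideanSpace.basisFun (Fin N) ℂ k⟫_ℂ‖ ≤ (√N)⁻¹ := by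
    intro j k
    rw [norm_inner_symm, EuclideanSpace.basisFun_apply, EuclideanSpace.inner_single_left,
      dftBasis, OrthonormalBasis.coe_mk, map_one, one_mul, norm_dftVec_apply]
  have hlog : -2 * Real.log (√N)⁻¹ = Real.log N := by
    rw [Real.log_inv, Real.log_sqrt (Nat.cast_nonneg N)]
    ring
  exact hlog ▸ maassen_uffink _ _ (by positivity) hentry hψ
end

section
/- Entropic uncertainty principle for quantum partitions: Let ℋ be a complex Hilbert space and let ρ = {ρ_i}_{i∈I} and τ = {τ_j}_{j∈J} be two finite families of bounded operators on ℋ satisfying ∑_{i∈I} ρ_i* ρ_i = Id and ∑_{j∈J} τ_j* τ_j = Id. Then for every unit vector ψ ∈ ℋ, the entropies H(ψ,ρ) = ∑_{i∈I} η(‖ρ_i ψ‖²) and H(ψ,τ) = ∑_{j∈J} η(‖τ_j ψ‖²) satisfy H(ψ,ρ) + H(ψ,τ) ≥ −2·log( max_{i∈I, j∈J} ‖τ_j ρ_i*‖ ), where ‖·‖ is the operator norm. -/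
/-!
Write `pᵢ = ‖ρᵢ ψ‖²`, `qⱼ = ‖τⱼ ψ‖²` and `c = maxᵢⱼ ‖τⱼ ρᵢ*‖`. The map `(uᵢ) ↦ (τⱼ ∑ᵢ ρᵢ* uᵢ)ⱼ`
is a contraction for the `ℓ²` norms and has norm at most `c` from `ℓ¹` to `ℓ^∞`. Riesz–Thorin
interpolation between the two, done by hand with Hadamard's three-lines theorem applied to
`F(z) = ∑ⱼ bⱼ^(t(1+z)-1) ⟪τⱼ ψ, τⱼ ∑ᵢ ρᵢ* (aᵢ^(s(1+z)-1) ρᵢ ψ)⟫` (`aᵢ = √pᵢ`, `bⱼ = √qⱼ`,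
`s = 1/(1+θ)`, `t = 1/(1-θ)`), gives for `0 ≤ θ < 1`
`(1 - θ) log ∑ⱼ qⱼ^t ≤ (1 + θ) log ∑ᵢ pᵢ^s + 2θ log c`,
the Rényi-entropy uncertainty relation `H_s(p) + H_t(q) ≥ -2 log c` (Maassen–Uffink).
Both sides vanish at `θ = 0`; comparing their derivatives there yields the Shannon-entropy bound,
because `d/dx log ∑ pᵢ^x = ∑ pᵢ log pᵢ` at `x = 1`.
-/

open scoped InnerProductSpace

open Finset Filter Topology ContinuousLinearMap

/-- `a ^ (κ - 1)`, written so as to be entire in `κ`. At `a = 0` it is `1` (as `Real.log 0 = 0`),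
which is harmless because it is only ever multiplied by `a`. -/
noncomputable def powWeight (a : ℝ) (κ : ℂ) : ℂ := Complex.exp ((κ - 1) * Real.log a)

@[fun_prop]
lemma differentiable_powWeight (a : ℝ) : Differentiable ℂ (powWeight a) := by
  unfold powWeight; fun_prop

lemma norm_powWeight (a : ℝ) (κ : ℂ) : ‖powWeight a κ‖ = Real.exp ((κ.re - 1) * Real.log a) := by
  simp [powWeight, Complex.norm_exp]

lemma ofReal_norm_powWeight (a x : ℝ) : (‖powWeight a x‖ : ℂ) = powWeight a x := by
  rw [norm_powWeight, powWeight]; push_cast; simp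

lemma norm_powWeight_mul_self {a : ℝ} (ha : 0 ≤ a) {κ : ℂ} (hκ : 0 < κ.re) :
    ‖powWeight a κ‖ * a = a ^ κ.re := by
  rcases ha.eq_or_lt with rfl | ha
  · simp [Real.zero_rpow hκ.ne']
  · rw [norm_powWeight, mul_comm _ (Real.log a), ← Real.rpow_def_of_pos ha,
      Real.rpow_sub_one ha.ne', div_mul_cancel₀ _ ha.ne']

lemma powWeight_mul_sq {a : ℝ} (ha : 0 ≤ a) {x : ℝ} (hx : 0 < x) :
    powWeight a x * (a : ℂ) ^ 2 = ((a ^ (x + 1) : ℝ) : ℂ) := by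
  have hw := norm_powWeight_mul_self ha (κ := x) (by simpa using hx)
  rw [Complex.ofReal_re] at hw
  rw [← ofReal_norm_powWeight, Real.rpow_add_one' ha (by positivity), ← hw]
  push_cast
  ring

lemma re_ofReal_mul_one_add (t : ℝ) (z : ℂ) : ((t : ℂ) * (1 + z)).re = t * (1 + z.re) := by
  simp

section Partition

variable {H : Type*} [NormedAddCommGroup H] [InnerProductSpace ℂ H] [CompleteSpace H]
  {I : Type*} [Fintype I] {ρ : I → H →L[ℂ] H}

lemma sum_adjoint_apply_apply (hρ : ∑ i, (adjoint (ρ i)).comp (ρ i) = 1) (x : H) :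
    ∑ i, adjoint (ρ i) (ρ i x) = x := by
  simpa using congrArg (· x) hρ

lemma sum_norm_apply_sq (hρ : ∑ i, (adjoint (ρ i)).comp (ρ i) = 1) (x : H) :
    ∑ i, ‖ρ i x‖ ^ 2 = ‖x‖ ^ 2 := by
  have h := congrArg (fun y ↦ RCLike.re ⟪x, y⟫_ℂ) (sum_adjoint_apply_apply hρ x)
  simpa only [inner_sum, adjoint_inner_right, map_sum, ← @norm_sq_eq_re_inner ℂ] using h

lemma norm_apply_le (hρ : ∑ i, (adjoint (ρ i)).comp (ρ i) = 1) (i : I) (x : H) :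
    ‖ρ i x‖ ≤ ‖x‖ := by
  rw [← pow_le_pow_iff_left₀ (norm_nonneg _) (norm_nonneg _) two_ne_zero,
    ← sum_norm_apply_sq hρ x]
  exact single_le_sum (f := fun i ↦ ‖ρ i x‖ ^ 2) (fun _ _ ↦ sq_nonneg _) (mem_univ i)

lemma norm_sum_adjoint_apply_le (hρ : ∑ i, (adjoint (ρ i)).comp (ρ i) = 1) (v : I → H) :
    ‖∑ i, adjoint (ρ i) (v i)‖ ≤ √(∑ i, ‖v i‖ ^ 2) := by
  set y := ∑ i, adjoint (ρ i) (v i)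
  have hy : ‖y‖ ^ 2 ≤ √(∑ i, ‖v i‖ ^ 2) * ‖y‖ := calc
    ‖y‖ ^ 2 = ∑ i, RCLike.re ⟪v i, ρ i y⟫_ℂ := by
      simp only [y, @norm_sq_eq_re_inner ℂ, sum_inner, adjoint_inner_left, map_sum]
    _ ≤ ∑ i, ‖v i‖ * ‖ρ i y‖ :=
      sum_le_sum fun i _ ↦ (RCLike.re_le_norm _).trans (norm_inner_le_norm _ _)
    _ ≤ √(∑ i, ‖v i‖ ^ 2) * √(∑ i, ‖ρ i y‖ ^ 2) := Real.sum_mul_le_sqrt_mul_sqrt _ _ _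
    _ = √(∑ i, ‖v i‖ ^ 2) * ‖y‖ := by rw [sum_norm_apply_sq hρ, Real.sqrt_sq (norm_nonneg _)]
  nlinarith [Real.sqrt_nonneg (∑ i, ‖v i‖ ^ 2), norm_nonneg y]

lemma sum_norm_apply_sq_rpow_le_card (hρ : ∑ i, (adjoint (ρ i)).comp (ρ i) = 1) {x : H}
    (hx : ‖x‖ ≤ 1) {r : ℝ} (hr : 0 ≤ r) : ∑ i, (‖ρ i x‖ ^ 2) ^ r ≤ Fintype.card I := by
  calc ∑ i, (‖ρ i x‖ ^ 2) ^ r ≤ ∑ _i : I, (1 : ℝ) := sum_le_sum fun i _ ↦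
        Real.rpow_le_one (sq_nonneg _) (pow_le_one₀ (norm_nonneg _)
          ((norm_apply_le hρ i x).trans hx)) hr
    _ = Fintype.card I := by simp

end Partition

lemma sum_rpow_pos_s2 {K : Type*} [Fintype K] {q : K → ℝ} (hq : ∀ k, 0 ≤ q k) (hsum : ∑ k, q k = 1)
    (r : ℝ) : 0 < ∑ k, q k ^ r := by
  obtain ⟨k, -, hk⟩ := exists_lt_of_sum_lt (s := univ) (f := 0) (g := q) (by simp [hsum])
  exact sum_pos' (fun k _ ↦ Real.rpow_nonneg (hq k) r) ⟨k, mem_univ k, Real.rpow_pos_of_pos hk r⟩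

section Interpolation

variable {H : Type*} [NormedAddCommGroup H] [InnerProductSpace ℂ H] [CompleteSpace H]
  {I J : Type*} [Fintype I] [Fintype J] (ρ : I → H →L[ℂ] H) (τ : J → H →L[ℂ] H) (ψ : H)

noncomputable def interpolationVector (s : ℝ) (z : ℂ) : H :=
  ∑ i, adjoint (ρ i) (powWeight ‖ρ i ψ‖ (s * (1 + z)) • ρ i ψ)

noncomputable def interpolationFunction (s t : ℝ) (z : ℂ) : ℂ :=
  ∑ j, powWeight ‖τ j ψ‖ (t * (1 + z)) * ⟪τ j ψ, τ j (interpolationVector ρ ψ s z)⟫_ℂ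

lemma interpolationFunction_eq_sum_sum (s t : ℝ) (z : ℂ) :
    interpolationFunction ρ τ ψ s t z = ∑ j, ∑ i, powWeight ‖τ j ψ‖ (t * (1 + z)) *
      powWeight ‖ρ i ψ‖ (s * (1 + z)) * ⟪τ j ψ, (τ j ∘L adjoint (ρ i)) (ρ i ψ)⟫_ℂ := by
  simp only [interpolationFunction, interpolationVector, map_sum, map_smul, inner_sum,
    inner_smul_right, mul_sum, comp_apply, mul_assoc]

lemma differentiable_interpolationFunction (s t : ℝ) :
    Differentiable ℂ (interpolationFunction ρ τ ψ s t) := by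
  simp_rw [funext (interpolationFunction_eq_sum_sum ρ τ ψ s t)]
  fun_prop

variable {ρ τ}

lemma norm_interpolationVector_le (hρ : ∑ i, (adjoint (ρ i)).comp (ρ i) = 1) {s : ℝ}
    (hs : 0 < s) {z : ℂ} (hz : 0 ≤ z.re) :
    ‖interpolationVector ρ ψ s z‖ ≤ √(∑ i, (‖ρ i ψ‖ ^ 2) ^ (s * (1 + z.re))) := by
  refine (norm_sum_adjoint_apply_le hρ _).trans_eq ?_
  have hκ : 0 < ((s : ℂ) * (1 + z)).re := by rw [re_ofReal_mul_one_add]; positivity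
  simp_rw [norm_smul, norm_powWeight_mul_self (norm_nonneg _) hκ, re_ofReal_mul_one_add,
    Real.rpow_pow_comm (norm_nonneg _)]

lemma norm_interpolationFunction_le (hρ : ∑ i, (adjoint (ρ i)).comp (ρ i) = 1)
    (hτ : ∑ j, (adjoint (τ j)).comp (τ j) = 1) {s t : ℝ} (hs : 0 < s) (ht : 0 < t) {z : ℂ}
    (hz : 0 ≤ z.re) :
    ‖interpolationFunction ρ τ ψ s t z‖ ≤
      √(∑ j, (‖τ j ψ‖ ^ 2) ^ (t * (1 + z.re))) * √(∑ i, (‖ρ i ψ‖ ^ 2) ^ (s * (1 + z.re))) := by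
  set Φ := interpolationVector ρ ψ s z
  have hκ : 0 < ((t : ℂ) * (1 + z)).re := by rw [re_ofReal_mul_one_add]; positivity
  calc ‖interpolationFunction ρ τ ψ s t z‖
      ≤ ∑ j, ‖τ j ψ‖ ^ (t * (1 + z.re)) * ‖τ j Φ‖ := by
        refine (norm_sum_le _ _).trans (sum_le_sum fun j _ ↦ ?_)
        rw [norm_mul, ← re_ofReal_mul_one_add, ← norm_powWeight_mul_self (norm_nonneg _) hκ,
          mul_assoc]
        gcongr
        exact norm_inner_le_norm _ _
    _ ≤ √(∑ j, (‖τ j ψ‖ ^ (t * (1 + z.re))) ^ 2) * √(∑ j, ‖τ j Φ‖ ^ 2) :=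
        Real.sum_mul_le_sqrt_mul_sqrt _ _ _
    _ ≤ _ := by
        simp_rw [sum_norm_apply_sq hτ, Real.sqrt_sq (norm_nonneg _),
          Real.rpow_pow_comm (norm_nonneg _)]
        gcongr
        exact norm_interpolationVector_le ψ hρ hs hz

lemma norm_interpolationFunction_le_mul {c : ℝ} (hcb : ∀ i j, ‖τ j ∘L adjoint (ρ i)‖ ≤ c)
    {s t : ℝ} (hs : 0 < s) (ht : 0 < t) {z : ℂ} (hz : z.re = 1) :
    ‖interpolationFunction ρ τ ψ s t z‖ ≤
      c * ((∑ j, (‖τ j ψ‖ ^ 2) ^ t) * ∑ i, (‖ρ i ψ‖ ^ 2) ^ s) := by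
  have hw (r : ℝ) (hr : 0 < r) (a : ℝ) (ha : 0 ≤ a) :
      ‖powWeight a (r * (1 + z))‖ * a = (a ^ 2) ^ r := by
    rw [norm_powWeight_mul_self ha (by rw [re_ofReal_mul_one_add]; positivity),
      re_ofReal_mul_one_add, hz, ← Real.rpow_pow_comm ha, ← Real.rpow_mul_natCast ha]
    norm_num
  rw [interpolationFunction_eq_sum_sum, sum_mul_sum, mul_sum]
  refine (norm_sum_le _ _).trans (sum_le_sum fun j _ ↦ ?_)
  rw [mul_sum]
  refine (norm_sum_le _ _).trans (sum_le_sum fun i _ ↦ ?_)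
  calc _ ≤ ‖powWeight ‖τ j ψ‖ (t * (1 + z))‖ * ‖powWeight ‖ρ i ψ‖ (s * (1 + z))‖ *
        (‖τ j ψ‖ * (c * ‖ρ i ψ‖)) := by
        rw [norm_mul, norm_mul]
        gcongr
        exact (norm_inner_le_norm (𝕜 := ℂ) _ _).trans
          (mul_le_mul_of_nonneg_left (le_of_opNorm_le _ (hcb i j) _) (norm_nonneg _))
    _ = _ := by rw [← hw t ht _ (norm_nonneg _), ← hw s hs _ (norm_nonneg _)]; ring

lemma interpolationVector_eq_self (hρ : ∑ i, (adjoint (ρ i)).comp (ρ i) = 1) {s θ : ℝ}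
    (hsθ : s * (1 + θ) = 1) : interpolationVector ρ ψ s θ = ψ := by
  have hκ : (s : ℂ) * (1 + θ) = 1 := by exact_mod_cast hsθ
  simp [interpolationVector, powWeight, hκ, sum_adjoint_apply_apply hρ]

lemma interpolationFunction_ofReal (hρ : ∑ i, (adjoint (ρ i)).comp (ρ i) = 1) {s t θ : ℝ}
    (hsθ : s * (1 + θ) = 1) (htθ : 0 < t * (1 + θ)) :
    interpolationFunction ρ τ ψ s t θ = ((∑ j, ‖τ j ψ‖ ^ (t * (1 + θ) + 1) : ℝ) : ℂ) := by
  have hκ : (t : ℂ) * (1 + θ) = ((t * (1 + θ) : ℝ) : ℂ) := by push_cast; ring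
  rw [interpolationFunction, interpolationVector_eq_self ψ hρ hsθ, Complex.ofReal_sum]
  refine sum_congr rfl fun j _ ↦ ?_
  rw [hκ, inner_self_eq_norm_sq_to_K]
  exact powWeight_mul_sq (norm_nonneg _) htθ

lemma bddAbove_norm_interpolationFunction (hρ : ∑ i, (adjoint (ρ i)).comp (ρ i) = 1)
    (hτ : ∑ j, (adjoint (τ j)).comp (τ j) = 1) (hψ : ‖ψ‖ ≤ 1) {s t : ℝ} (hs : 0 < s)
    (ht : 0 < t) :
    BddAbove ((norm ∘ interpolationFunction ρ τ ψ s t) ''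
      Complex.HadamardThreeLines.verticalClosedStrip 0 1) := by
  refine ⟨√(Fintype.card J) * √(Fintype.card I), ?_⟩
  rintro _ ⟨z, hz, rfl⟩
  have hx : 0 ≤ z.re := hz.1
  refine (norm_interpolationFunction_le ψ hρ hτ hs ht hx).trans ?_
  gcongr <;> exact sum_norm_apply_sq_rpow_le_card ‹_› hψ (by positivity)

theorem renyi_entropic_uncertainty (hρ : ∑ i, (adjoint (ρ i)).comp (ρ i) = 1)
    (hτ : ∑ j, (adjoint (τ j)).comp (τ j) = 1) (hψ : ‖ψ‖ = 1) {c : ℝ} (hc : 0 < c)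
    (hcb : ∀ i j, ‖τ j ∘L adjoint (ρ i)‖ ≤ c) {θ : ℝ} (hθ : θ ∈ Set.Ico 0 1) :
    (1 - θ) * Real.log (∑ j, (‖τ j ψ‖ ^ 2) ^ (1 - θ)⁻¹) ≤
      (1 + θ) * Real.log (∑ i, (‖ρ i ψ‖ ^ 2) ^ (1 + θ)⁻¹) + θ * (2 * Real.log c) := by
  obtain ⟨hθ0, hθ1⟩ := hθ
  set s := (1 + θ)⁻¹
  set t := (1 - θ)⁻¹
  have hs : 0 < s := by positivity
  have ht : 0 < t := inv_pos.2 (by linarith)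
  set P := ∑ i, (‖ρ i ψ‖ ^ 2) ^ s
  set Q := ∑ j, (‖τ j ψ‖ ^ 2) ^ t
  have hP : 0 < P :=
    sum_rpow_pos_s2 (fun _ ↦ sq_nonneg _) (by rw [sum_norm_apply_sq hρ, hψ, one_pow]) s
  have hQ : 0 < Q :=
    sum_rpow_pos_s2 (fun _ ↦ sq_nonneg _) (by rw [sum_norm_apply_sq hτ, hψ, one_pow]) t
  have hexp : t * (1 + θ) + 1 = 2 * t := by
    have : 1 - θ ≠ 0 := by linarith
    simp only [t]; field_simp; ring
  have hFθ : interpolationFunction ρ τ ψ s t θ = Q := by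
    rw [interpolationFunction_ofReal ψ hρ (inv_mul_cancel₀ (by positivity)) (by positivity), hexp]
    simp_rw [Real.rpow_mul (norm_nonneg _), Real.rpow_two]
    rfl
  have h3 := Complex.HadamardThreeLines.norm_le_interp_of_mem_verticalClosedStrip'
    (f := interpolationFunction ρ τ ψ s t) (z := θ) (a := √Q * √P) (b := c * (Q * P))
    zero_lt_one
    (by simpa [Complex.HadamardThreeLines.verticalClosedStrip] using ⟨hθ0, hθ1.le⟩)
    (differentiable_interpolationFunction ρ τ ψ s t).diffContOnCl
    (bddAbove_norm_interpolationFunction ψ hρ hτ hψ.le hs ht)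
    (fun z (hz : z.re = 0) ↦ by
      simpa [hz] using norm_interpolationFunction_le ψ hρ hτ hs ht hz.ge)
    (fun z hz ↦ norm_interpolationFunction_le_mul ψ hcb hs ht hz)
  simp only [hFθ, Complex.norm_real, Real.norm_of_nonneg hQ.le, Complex.ofReal_re, sub_zero,
    div_one] at h3
  have hlog := Real.log_le_log hQ h3
  rw [Real.log_mul (by positivity) (by positivity), Real.log_rpow (by positivity),
    Real.log_rpow (by positivity), Real.log_mul (by positivity) (by positivity),
    Real.log_sqrt hQ.le, Real.log_sqrt hP.le, Real.log_mul hc.ne' (by positivity),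
    Real.log_mul hQ.ne' hP.ne'] at hlog
  linarith

end Interpolation

lemma hasDerivAt_const_rpow_one {a : ℝ} (ha : 0 ≤ a) :
    HasDerivAt (fun x : ℝ ↦ a ^ x) (a * Real.log a) 1 := by
  rcases ha.eq_or_lt with rfl | ha
  · refine (hasDerivAt_const (1 : ℝ) (0 : ℝ)).congr_of_eventuallyEq ?_ |>.congr_deriv (by simp)
    filter_upwards [eventually_gt_nhds one_pos] with x hx
    exact Real.zero_rpow hx.ne'
  · simpa using (Real.hasStrictDerivAt_const_rpow ha 1).hasDerivAt

lemma hasDerivAt_log_sum_rpow_s2 {K : Type*} [Fintype K] {p : K → ℝ} (hp : ∀ k, 0 ≤ p k)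
    (hsum : ∑ k, p k = 1) :
    HasDerivAt (fun x : ℝ ↦ Real.log (∑ k, p k ^ x)) (∑ k, p k * Real.log (p k)) 1 := by
  simpa [hsum] using (HasDerivAt.fun_sum fun k _ ↦ hasDerivAt_const_rpow_one (hp k)).log
    (by simp [hsum] : ∑ k, p k ^ (1 : ℝ) ≠ 0)

lemma tendsto_inv_one_add_mul_nhdsNE_one {σ : ℝ} (hσ : σ ≠ 0) :
    Tendsto (fun θ : ℝ ↦ (1 + σ * θ)⁻¹) (𝓝[>] 0) (𝓝[≠] 1) := by
  refine tendsto_nhdsWithin_iff.2 ⟨?_, ?_⟩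
  · have := ((continuous_const.add (continuous_const.mul continuous_id)).tendsto (0 : ℝ)).inv₀
      (by simp : (1 + σ * 0 : ℝ) ≠ 0)
    simpa using this.mono_left nhdsWithin_le_nhds
  · filter_upwards [self_mem_nhdsWithin] with θ (hθ : 0 < θ)
    simp [hσ, hθ.ne']

lemma add_le_of_hasDerivAt_of_forall_le {A B : ℝ → ℝ} {a b L : ℝ} (hA : HasDerivAt A a 1)
    (hB : HasDerivAt B b 1) (hA1 : A 1 = 0) (hB1 : B 1 = 0)
    (h : ∀ θ ∈ Set.Ioo (0 : ℝ) 1, (1 - θ) * B (1 - θ)⁻¹ ≤ (1 + θ) * A (1 + θ)⁻¹ + θ * L) :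
    a + b ≤ L := by
  have hslope : Tendsto (fun θ ↦ slope A 1 (1 + θ)⁻¹ + slope B 1 (1 - θ)⁻¹) (𝓝[>] 0)
      (𝓝 (a + b)) := by
    have hA' := hA.tendsto_slope.comp (tendsto_inv_one_add_mul_nhdsNE_one one_ne_zero)
    have hB' :=
      hB.tendsto_slope.comp (tendsto_inv_one_add_mul_nhdsNE_one (neg_ne_zero.2 one_ne_zero))
    simpa [sub_eq_add_neg] using hA'.add hB'
  refine le_of_tendsto hslope ?_
  filter_upwards [Ioo_mem_nhdsGT one_pos] with θ hθ
  obtain ⟨hθ0, hθ1⟩ := hθ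
  have hslope_eq : slope A 1 (1 + θ)⁻¹ + slope B 1 (1 - θ)⁻¹ =
      ((1 - θ) * B (1 - θ)⁻¹ - (1 + θ) * A (1 + θ)⁻¹) / θ := by
    have e1 : (1 + θ)⁻¹ - 1 = -θ / (1 + θ) := by field_simp; ring
    have e2 : (1 - θ)⁻¹ - 1 = θ / (1 - θ) := by
      have : 1 - θ ≠ 0 := by linarith
      field_simp; ring
    rw [slope_def_field, slope_def_field, hA1, hB1, e1, e2, sub_zero, sub_zero,
      div_div_eq_mul_div, div_div_eq_mul_div, div_neg]
    ring
  rw [hslope_eq, div_le_iff₀ hθ0]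
  linarith [h θ ⟨hθ0, hθ1⟩]

lemma pos_of_forall_norm_comp_adjoint_le {H : Type*} [NormedAddCommGroup H]
    [InnerProductSpace ℂ H] [CompleteSpace H] {I J : Type*} [Fintype I] [Fintype J]
    {ρ : I → H →L[ℂ] H} {τ : J → H →L[ℂ] H} (hρ : ∑ i, (adjoint (ρ i)).comp (ρ i) = 1)
    (hτ : ∑ j, (adjoint (τ j)).comp (τ j) = 1) {ψ : H} (hψ : ψ ≠ 0) {c : ℝ}
    (hcb : ∀ i j, ‖τ j ∘L adjoint (ρ i)‖ ≤ c) : 0 < c := by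
  by_contra! hc
  have hτψ (j : J) : τ j ψ = 0 := by
    rw [← sum_adjoint_apply_apply hρ ψ, map_sum]
    refine sum_eq_zero fun i _ ↦ ?_
    rw [← comp_apply, norm_le_zero_iff.1 ((hcb i j).trans hc), zero_apply]
  have h := (sum_norm_apply_sq hτ ψ).symm
  simp [hτψ, hψ] at h

theorem entropic_uncertainty_quantum_partition_general
    {H : Type*} [NormedAddCommGroup H] [InnerProductSpace ℂ H] [CompleteSpace H]
    {I J : Type*} [Fintype I] [Fintype J]
    (ρ : I → H →L[ℂ] H) (τ : J → H →L[ℂ] H)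
    (hρ : ∑ i, (ContinuousLinearMap.adjoint (ρ i)).comp (ρ i) = 1)
    (hτ : ∑ j, (ContinuousLinearMap.adjoint (τ j)).comp (τ j) = 1)
    (ψ : H) (hψ : ‖ψ‖ = 1) :
    (∑ i, eta (‖ρ i ψ‖ ^ 2)) + (∑ j, eta (‖τ j ψ‖ ^ 2)) ≥
      -2 * Real.log (⨆ p : I × J, ‖(τ p.2).comp (ContinuousLinearMap.adjoint (ρ p.1))‖) := by
  set c := ⨆ p : I × J, ‖(τ p.2).comp (adjoint (ρ p.1))‖
  have hcb (i : I) (j : J) : ‖τ j ∘L adjoint (ρ i)‖ ≤ c :=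
    le_ciSup (f := fun p : I × J ↦ ‖τ p.2 ∘L adjoint (ρ p.1)‖) (Finite.bddAbove_range _) (i, j)
  have hψ0 : ψ ≠ 0 := by rintro rfl; simp at hψ
  have hc : 0 < c := pos_of_forall_norm_comp_adjoint_le hρ hτ hψ0 hcb
  have hp : ∑ i, ‖ρ i ψ‖ ^ 2 = 1 := by rw [sum_norm_apply_sq hρ, hψ, one_pow]
  have hq : ∑ j, ‖τ j ψ‖ ^ 2 = 1 := by rw [sum_norm_apply_sq hτ, hψ, one_pow]
  have key := add_le_of_hasDerivAt_of_forall_le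
    (hasDerivAt_log_sum_rpow_s2 (fun _ ↦ sq_nonneg _) hp)
    (hasDerivAt_log_sum_rpow_s2 (fun _ ↦ sq_nonneg _) hq)
    (by simp [hp]) (by simp [hq])
    (fun θ hθ ↦ renyi_entropic_uncertainty ψ hρ hτ hψ hc hcb (Set.Ioo_subset_Ico_self hθ))
  simp only [eta, neg_mul, sum_neg_distrib]
  linarith

/-- **Entropic uncertainty principle for quantum partitions of unity.**
If `{ρ_i}` and `{τ_j}` are finite families of bounded operators on a complex
Hilbert space with `∑ ρ_i* ρ_i = Id` and `∑ τ_j* τ_j = Id`, then for every unit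
vector `ψ`,
`H(ψ,ρ) + H(ψ,τ) ≥ -2 log (max_{i,j} ‖τ_j ρ_i*‖)`. -/
theorem entropic_uncertainty_quantum_partition
    {H : Type*} [NormedAddCommGroup H] [InnerProductSpace ℂ H] [CompleteSpace H]
    {I J : Type*} [Fintype I] [Fintype J] [Nonempty I] [Nonempty J]
    (ρ : I → H →L[ℂ] H) (τ : J → H →L[ℂ] H)
    (hρ : ∑ i, (ContinuousLinearMap.adjoint (ρ i)).comp (ρ i) = 1)
    (hτ : ∑ j, (ContinuousLinearMap.adjoint (τ j)).comp (τ j) = 1)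
    (ψ : H) (hψ : ‖ψ‖ = 1) :
    (∑ i, eta (‖ρ i ψ‖ ^ 2)) + (∑ j, eta (‖τ j ψ‖ ^ 2)) ≥
      -2 * Real.log (⨆ p : I × J, ‖(τ p.2).comp (ContinuousLinearMap.adjoint (ρ p.1))‖) :=
  entropic_uncertainty_quantum_partition_general ρ τ hρ hτ ψ hψ
end

section
/- Norm of the cross block operator: Let ℋ be a complex Hilbert space and let {ρ_i}_{i∈I}, {τ_j}_{j∈J} be finite families of bounded operators on ℋ such that S_ρ = ∑_{i∈I} ρ_i* ρ_i and S_τ = ∑_{j∈J} τ_j* τ_j are bounded (automatically positive selfadjoint) operators. Let T : ℋ^{|I|} → ℋ^{|J|} be the block operator with entries T_{ji} = τ_j ρ_i*, i.e. (TΨ)_j = ∑_{i∈I} τ_j ρ_i* Ψ_i. Then the operator norm of T from ℓ²(ℋ^{|I|}) to ℓ²(ℋ^{|J|}) equals ‖√S_ρ · √S_τ‖, where √S denotes the positive square root of a positive selfadjoint bounded operator S and ‖·‖ is the operator norm on ℋ. -/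
/-!
With the column operators `V x = (ρ_i x)_i` and `U x = (τ_j x)_j` one has `T = U V†`,
`U† U = R_τ²` and `V† V = R_ρ²`. By the C⋆-identity `‖A† A‖ = ‖A‖²` the norm of an operator
depends only on `A† A`, hence `‖U V†‖ = ‖R_τ V†‖ = ‖V R_τ‖ = ‖R_ρ R_τ‖`.
-/

namespace ContinuousLinearMap

variable {𝕜 D E F G ι : Type*} [RCLike 𝕜]
  [NormedAddCommGroup D] [InnerProductSpace 𝕜 D]
  [NormedAddCommGroup E] [InnerProductSpace 𝕜 E]
  [NormedAddCommGroup F] [InnerProductSpace 𝕜 F]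
  [NormedAddCommGroup G] [InnerProductSpace 𝕜 G]

def column (A : ι → E →L[𝕜] F) : E →L[𝕜] PiLp 2 fun _ : ι => F :=
  (PiLp.continuousLinearEquiv 2 𝕜 _).symm.toContinuousLinearMap ∘L pi A

@[simp]
theorem column_apply (A : ι → E →L[𝕜] F) (x : E) (i : ι) : column A x i = A i x :=
  rfl

variable [CompleteSpace D] [CompleteSpace E] [CompleteSpace F] [CompleteSpace G]

theorem norm_eq_of_adjoint_comp_self_eq {A : E →L[𝕜] F} {B : E →L[𝕜] G}
    (h : adjoint A ∘L A = adjoint B ∘L B) : ‖A‖ = ‖B‖ := by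
  have hsq := norm_adjoint_comp_self A
  rw [h, norm_adjoint_comp_self] at hsq
  exact (mul_self_inj (norm_nonneg _) (norm_nonneg _)).mp hsq.symm

theorem norm_comp_eq_of_adjoint_comp_self_eq {A : E →L[𝕜] F} {B : E →L[𝕜] G}
    (h : adjoint A ∘L A = adjoint B ∘L B) (X : D →L[𝕜] E) : ‖A ∘L X‖ = ‖B ∘L X‖ :=
  norm_eq_of_adjoint_comp_self_eq <| by
    simpa only [adjoint_comp, comp_assoc] using congrArg (fun C => adjoint X ∘L C ∘L X) h

variable [Fintype ι]

theorem adjoint_column_apply (A : ι → E →L[𝕜] F) (Ψ : PiLp 2 fun _ : ι => F) :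
    adjoint (column A) Ψ = ∑ i, adjoint (A i) (Ψ i) := by
  refine ext_inner_left 𝕜 fun x => ?_
  simp only [adjoint_inner_right, PiLp.inner_apply, inner_sum, column_apply]

theorem adjoint_column_comp_column (A : ι → E →L[𝕜] F) :
    adjoint (column A) ∘L column A = ∑ i, adjoint (A i) ∘L A i := by
  ext x
  simp only [comp_apply, adjoint_column_apply, column_apply, sum_apply]

end ContinuousLinearMap

open ContinuousLinearMap in
/-- **Norm of the cross block operator.**
If `S_ρ = ∑ ρ_i* ρ_i` and `S_τ = ∑ τ_j* τ_j`, with positive square roots `R_ρ`, `R_τ`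
(i.e. positive selfadjoint operators with `R_ρ² = S_ρ`, `R_τ² = S_τ`), then the block
operator `T : ℋ^{|I|} → ℋ^{|J|}`, `(TΨ)_j = ∑_i τ_j ρ_i* Ψ_i`, has operator norm
`‖T‖ = ‖√S_ρ · √S_τ‖`. -/
theorem cross_block_operator_norm
    {H : Type*} [NormedAddCommGroup H] [InnerProductSpace ℂ H] [CompleteSpace H]
    {I J : Type*} [Fintype I] [Fintype J]
    (ρ : I → H →L[ℂ] H) (τ : J → H →L[ℂ] H)
    (Rρ Rτ : H →L[ℂ] H)
    (hRρpos : Rρ.IsPositive) (hRτpos : Rτ.IsPositive)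
    (hRρ : Rρ.comp Rρ = ∑ i, (ContinuousLinearMap.adjoint (ρ i)).comp (ρ i))
    (hRτ : Rτ.comp Rτ = ∑ j, (ContinuousLinearMap.adjoint (τ j)).comp (τ j))
    (T : (PiLp 2 fun _ : I => H) →L[ℂ] (PiLp 2 fun _ : J => H))
    (hT : ∀ (Ψ : PiLp 2 fun _ : I => H) (j : J),
      T Ψ j = ∑ i, (τ j) ((ContinuousLinearMap.adjoint (ρ i)) (Ψ i))) :
    ‖T‖ = ‖Rρ.comp Rτ‖ := by
  have hRρsa : adjoint Rρ = Rρ := hRρpos.isSelfAdjoint.adjoint_eq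
  have hRτsa : adjoint Rτ = Rτ := hRτpos.isSelfAdjoint.adjoint_eq
  have hTcol : T = column τ ∘L adjoint (column ρ) := by
    ext Ψ j
    rw [hT, comp_apply, column_apply, adjoint_column_apply, map_sum]
  calc ‖T‖ = ‖Rτ ∘L adjoint (column ρ)‖ := by
        rw [hTcol]
        exact norm_comp_eq_of_adjoint_comp_self_eq
          (by rw [adjoint_column_comp_column, hRτsa, hRτ]) _
    _ = ‖column ρ ∘L Rτ‖ := by
        rw [← adjoint.norm_map, adjoint_comp, adjoint_adjoint, hRτsa]
    _ = ‖Rρ ∘L Rτ‖ :=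
        norm_comp_eq_of_adjoint_comp_self_eq (by rw [adjoint_column_comp_column, hRρsa, hRρ]) _
end

section
/- Composite square-root estimate: Let S_ρ and S_τ be positive bounded selfadjoint operators on a complex Hilbert space ℋ with 0 ≤ S_ρ ≤ (1+ε)Id and 0 ≤ S_τ ≤ (1+ε)Id for some 0 < ε ≤ 1/2. If ψ is a unit vector with ‖(S_ρ − Id)ψ‖ ≤ 3ε and ‖(S_τ − Id)ψ‖ ≤ 3ε, then ‖√S_ρ √S_τ ψ − ψ‖ ≤ 4√ε, where √S denotes the positive square root. -/
/-!
The square roots inherit both hypotheses. Since `R ≥ 0`, the factorisation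
`S - 1 = (R + 1)(R - 1)` with `R + 1 ≥ 1` gives `‖Rψ - ψ‖ ≤ ‖Sψ - ψ‖ ≤ 3ε`, and the
C*-identity `‖R‖² = ‖R R‖ = ‖S‖ ≤ 1 + ε` gives `‖R‖ ≤ √(1 + ε)`. Writing
`R_ρ R_τ ψ - ψ = R_ρ (R_τ ψ - ψ) + (R_ρ ψ - ψ)` yields `(√(1 + ε) + 1) · 3ε`, which is below
`4√ε` for small `ε`; for the remaining `ε ≤ 1/2` the crude bound `(1 + ε) + 1` suffices.
-/

open ContinuousLinearMap

theorem ContinuousLinearMap.IsPositive.norm_sub_le_norm_mul_self_sub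
    {𝕜 E : Type*} [RCLike 𝕜] [NormedAddCommGroup E] [InnerProductSpace 𝕜 E]
    {R : E →L[𝕜] E} (hR : R.IsPositive) (x : E) :
    ‖R x - x‖ ≤ ‖(R * R) x - x‖ := by
  set v := R x - x
  have hsplit : (R * R) x - x = R v + v := by
    change R (R x) - x = _
    simp only [v, map_sub]; abel
  have hsq : ‖v‖ ^ 2 ≤ ‖(R * R) x - x‖ * ‖v‖ := calc
    ‖v‖ ^ 2 ≤ RCLike.re (inner 𝕜 (R v) v) + ‖v‖ ^ 2 := by
      linarith [hR.re_inner_nonneg_left v]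
    _ = RCLike.re (inner 𝕜 ((R * R) x - x) v) := by
      rw [hsplit, inner_add_left, map_add, inner_self_eq_norm_sq]
    _ ≤ ‖(R * R) x - x‖ * ‖v‖ := re_inner_le_norm _ _
  rcases (norm_nonneg v).eq_or_lt with hv | hv
  · rw [← hv]; exact norm_nonneg _
  · nlinarith

theorem IsSelfAdjoint.norm_le_sqrt_of_mul_self_le
    {A : Type*} [CStarAlgebra A] [PartialOrder A] [StarOrderedRing A]
    {a : A} (ha : IsSelfAdjoint a) {r : ℝ} (hr : 0 ≤ r) (h : a * a ≤ algebraMap ℝ A r) :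
    ‖a‖ ≤ √r := by
  have hnonneg : 0 ≤ a * a := by simpa only [ha.star_eq] using star_mul_self_nonneg a
  rw [Real.le_sqrt (norm_nonneg a) hr, ← ha.norm_mul_self]
  exact (CStarAlgebra.norm_le_iff_le_algebraMap _ hr hnonneg).mpr h

theorem Real.min_sqrt_bounds_le_four_sqrt {ε : ℝ} (hε0 : 0 ≤ ε) (hε1 : ε ≤ 1 / 2) :
    min ((√(1 + ε) + 1) * (3 * ε)) (1 + ε + 1) ≤ 4 * √ε := by
  set s := √ε
  have hs0 : 0 ≤ s := Real.sqrt_nonneg ε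
  have hs2 : s ^ 2 = ε := Real.sq_sqrt hε0
  -- `2 + s² ≤ 4s` exactly for `s ≥ 2 - √2 ≈ 0.586`, and `6.51 s² ≤ 4s` for `s ≤ 0.61`.
  rcases le_total s (59 / 100) with hs | hs
  · have hroot : √(1 + ε) ≤ 117 / 100 := Real.sqrt_le_iff.mpr ⟨by norm_num, by nlinarith⟩
    refine min_le_left _ _ |>.trans ?_
    nlinarith
  · have hs1 : s ≤ 71 / 100 := by nlinarith
    refine min_le_right _ _ |>.trans ?_
    nlinarith

theorem composite_sqrt_estimate_general
    {H : Type*} [NormedAddCommGroup H] [InnerProductSpace ℂ H] [CompleteSpace H]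
    (Sρ Sτ Rρ Rτ : H →L[ℂ] H) (ε : ℝ) (hε0 : 0 < ε) (hε1 : ε ≤ 1 / 2)
    (hSρle : ((((1 + ε : ℝ) : ℂ) • (1 : H →L[ℂ] H)) - Sρ).IsPositive)
    (hSτle : ((((1 + ε : ℝ) : ℂ) • (1 : H →L[ℂ] H)) - Sτ).IsPositive)
    (hRρpos : Rρ.IsPositive) (hRρ : Rρ.comp Rρ = Sρ)
    (hRτpos : Rτ.IsPositive) (hRτ : Rτ.comp Rτ = Sτ)
    (ψ : H) (hψ : ‖ψ‖ = 1)
    (hψρ : ‖Sρ ψ - ψ‖ ≤ 3 * ε) (hψτ : ‖Sτ ψ - ψ‖ ≤ 3 * ε) :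
    ‖Rρ (Rτ ψ) - ψ‖ ≤ 4 * Real.sqrt ε := by
  rw [← mul_def] at hRρ hRτ
  have hscalar : algebraMap ℝ (H →L[ℂ] H) (1 + ε) = ((1 + ε : ℝ) : ℂ) • 1 := by
    rw [Algebra.algebraMap_eq_smul_one]; exact RCLike.real_smul_eq_coe_smul _ _
  have hnormρ : ‖Rρ‖ ≤ √(1 + ε) := hRρpos.isSelfAdjoint.norm_le_sqrt_of_mul_self_le
    (by linarith) (by rw [hscalar, le_def, hRρ]; exact hSρle)
  have hnormτ : ‖Rτ‖ ≤ √(1 + ε) := hRτpos.isSelfAdjoint.norm_le_sqrt_of_mul_self_le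
    (by linarith) (by rw [hscalar, le_def, hRτ]; exact hSτle)
  have hρ : ‖Rρ ψ - ψ‖ ≤ 3 * ε := (hRρpos.norm_sub_le_norm_mul_self_sub ψ).trans (hRρ ▸ hψρ)
  have hτ : ‖Rτ ψ - ψ‖ ≤ 3 * ε := (hRτpos.norm_sub_le_norm_mul_self_sub ψ).trans (hRτ ▸ hψτ)
  have hnear : ‖Rρ (Rτ ψ) - ψ‖ ≤ (√(1 + ε) + 1) * (3 * ε) := calc
    ‖Rρ (Rτ ψ) - ψ‖ = ‖Rρ (Rτ ψ - ψ) + (Rρ ψ - ψ)‖ := by rw [map_sub, sub_add_sub_cancel]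
    _ ≤ ‖Rρ‖ * ‖Rτ ψ - ψ‖ + ‖Rρ ψ - ψ‖ := norm_add_le_of_le (le_opNorm _ _) le_rfl
    _ ≤ √(1 + ε) * (3 * ε) + 3 * ε := by gcongr
    _ = (√(1 + ε) + 1) * (3 * ε) := by ring
  have hfar : ‖Rρ (Rτ ψ) - ψ‖ ≤ 1 + ε + 1 := calc
    ‖Rρ (Rτ ψ) - ψ‖ ≤ ‖Rρ‖ * (‖Rτ‖ * ‖ψ‖) + ‖ψ‖ :=
      (norm_sub_le _ _).trans (by gcongr; exact le_opNorm_of_le _ (le_opNorm _ _))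
    _ ≤ √(1 + ε) * √(1 + ε) + 1 := by rw [hψ, mul_one]; gcongr
    _ = 1 + ε + 1 := by rw [Real.mul_self_sqrt (by linarith)]
  exact (le_min hnear hfar).trans (Real.min_sqrt_bounds_le_four_sqrt hε0.le hε1)

/-- **Composite square-root estimate.**
Let `S_ρ`, `S_τ` be positive bounded selfadjoint operators with
`0 ≤ S_ρ, S_τ ≤ (1+ε)Id` for some `0 < ε ≤ 1/2`, and let `R_ρ = √S_ρ`,
`R_τ = √S_τ` be their positive square roots (positive selfadjoint operators
squaring to `S_ρ`, `S_τ`).  If `ψ` is a unit vector with `‖(S_ρ − Id)ψ‖ ≤ 3ε`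
and `‖(S_τ − Id)ψ‖ ≤ 3ε`, then `‖√S_ρ √S_τ ψ − ψ‖ ≤ 4√ε`. -/
theorem composite_sqrt_estimate
    {H : Type*} [NormedAddCommGroup H] [InnerProductSpace ℂ H] [CompleteSpace H]
    (Sρ Sτ Rρ Rτ : H →L[ℂ] H) (ε : ℝ) (hε0 : 0 < ε) (hε1 : ε ≤ 1 / 2)
    (hSρpos : Sρ.IsPositive)
    (hSρle : ((((1 + ε : ℝ) : ℂ) • (1 : H →L[ℂ] H)) - Sρ).IsPositive)
    (hSτpos : Sτ.IsPositive)
    (hSτle : ((((1 + ε : ℝ) : ℂ) • (1 : H →L[ℂ] H)) - Sτ).IsPositive)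
    (hRρpos : Rρ.IsPositive) (hRρ : Rρ.comp Rρ = Sρ)
    (hRτpos : Rτ.IsPositive) (hRτ : Rτ.comp Rτ = Sτ)
    (ψ : H) (hψ : ‖ψ‖ = 1)
    (hψρ : ‖Sρ ψ - ψ‖ ≤ 3 * ε) (hψτ : ‖Sτ ψ - ψ‖ ≤ 3 * ε) :
    ‖Rρ (Rτ ψ) - ψ‖ ≤ 4 * Real.sqrt ε :=
  composite_sqrt_estimate_general Sρ Sτ Rρ Rτ ε hε0 hε1 hSρle hSτle hRρpos hRρ hRτpos hRτ ψ hψ hψρ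
    hψτ
end
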